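/- arXiv:1005.0316 — 9 statements merged into one kernel-verified Lean document; each statement's English description precedes it below -/
import Mathlib

section
/- Let λ be a partition of n and identify the boxes of the doubled diagram 2λ = (2λ₁, 2λ₂, …) with {1,…,2n} by numbering them consecutively along the rows. Let S be the first pair-partition of [2n] (pairing 2i−1 with 2i), which pairs each box in column 2i−1 with its right neighbor in column 2i. If σ is a permutation of {1,…,2n} that maps every box of 2λ to a box in the same column, then the sign of σ equals (−1)^{n − |L(σ·S, S)|}, where σ·S = σ∘S∘σ⁻¹ and |L(·,·)| is the number of loops. -/
/-!
Every row of `2λ` has even length, so a box's number and its column have the same parity and a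
column-preserving `σ` preserves parity. Writing `[2n] = [n] × {0, 1}` via `t ↦ (⌊t/2⌋, t mod 2)`,
`S` swaps the two layers and `σ` acts on them by permutations `τ₀, τ₁` of `[n]`, so
`sign σ = sign τ₀ · sign τ₁ = sign (τ₀ τ₁⁻¹)`. The pair-partition `σ·S` sends `(a, 1)` to
`(τ₀ τ₁⁻¹ a, 0)`, hence the loops of `(σ·S, S)` correspond to the cycles of `τ₀ τ₁⁻¹` (fixed points
included), and a permutation of `[n]` with `c` cycles has sign `(-1) ^ (n - c)`.
-/

open scoped BigOperators

namespace ZonalPP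

/-- A pair-partition of `[N]` (with `N` even), encoded as a fixed-point-free involution. -/
def IsPairPartition {N : ℕ} (s : Equiv.Perm (Fin N)) : Prop :=
  Function.Involutive s ∧ ∀ x, s x ≠ x

noncomputable instance {G α : Type*} [Group G] [MulAction G α] [Finite α] :
    Fintype (MulAction.orbitRel.Quotient G α) :=
  Fintype.ofFinite _

/-- The loops of a couple of pair-partitions: orbits of the subgroup generated by `a, b`. -/
abbrev Loops {N : ℕ} (a b : Equiv.Perm (Fin N)) : Type :=
  MulAction.orbitRel.Quotient (Subgroup.closure ({a, b} : Set (Equiv.Perm (Fin N)))) (Fin N)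

/-- The set of elements of a loop. -/
def loopSet {N : ℕ} {a b : Equiv.Perm (Fin N)} (q : Loops a b) : Set (Fin N) :=
  MulAction.orbitRel.Quotient.orbit q

/-- Number of loops `|L(a,b)|`. -/
noncomputable def numLoops {N : ℕ} (a b : Equiv.Perm (Fin N)) : ℕ :=
  Nat.card (Loops a b)

/-- The type of a couple of pair-partitions: the multiset of halved loop sizes. -/
noncomputable def loopType {N : ℕ} (a b : Equiv.Perm (Fin N)) : Multiset ℕ :=
  (Finset.univ : Finset (Loops a b)).val.map fun q => Nat.card (loopSet q) / 2

/-- The multiset of cycle lengths (including fixed points) of a permutation. -/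
noncomputable def cycleSizes {N : ℕ} (σ : Equiv.Perm (Fin N)) : Multiset ℕ :=
  (Finset.univ : Finset (MulAction.orbitRel.Quotient
      (Subgroup.closure ({σ} : Set (Equiv.Perm (Fin N)))) (Fin N))).val.map
    fun q => Nat.card (MulAction.orbitRel.Quotient.orbit q)

/-- `z_μ = μ₁μ₂⋯ ∏ᵢ mᵢ(μ)!`. -/
def zMu {n : ℕ} (μ : n.Partition) : ℕ :=
  μ.parts.prod * ∏ i ∈ μ.parts.toFinset, (μ.parts.count i).factorial

/-- The first pair-partition `S`, pairing `2i` with `2i+1` (0-indexed). -/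
def firstPP (n : ℕ) : Equiv.Perm (Fin (2 * n)) where
  toFun x := ⟨2 * ((x : ℕ) / 2) + (1 - (x : ℕ) % 2), by have := x.isLt; omega⟩
  invFun x := ⟨2 * ((x : ℕ) / 2) + (1 - (x : ℕ) % 2), by have := x.isLt; omega⟩
  left_inv x := by
    apply Fin.ext
    have := x.isLt
    simp only [Fin.val_mk]
    omega
  right_inv x := by
    apply Fin.ext
    have := x.isLt
    simp only [Fin.val_mk]
    omega

/-- Row lengths of a partition (weakly decreasing), 0-indexed; `rowLen lam r = λ_{r+1}`. -/
def rowLen {n : ℕ} (lam : n.Partition) (r : ℕ) : ℕ :=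
  ((lam.parts.sort (· ≤ ·)).reverse).getD r 0

/-- `f` maps into the boxes of `2λ`; a box is a pair `(row, column)`, both 0-indexed. -/
def InBoxes2 {M n : ℕ} (lam : n.Partition) (f : Fin M → ℕ × ℕ) : Prop :=
  ∀ l, (f l).2 < 2 * rowLen lam (f l).1

/-- Condition (P0): `f l` and `f (S₀ l)` are neighbors in `2λ`. -/
def P0cond {M : ℕ} (S0 : Equiv.Perm (Fin M)) (f : Fin M → ℕ × ℕ) : Prop :=
  ∀ l, (f (S0 l)).1 = (f l).1 ∧ (f (S0 l)).2 / 2 = (f l).2 / 2 ∧ (f (S0 l)).2 ≠ (f l).2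

/-- Condition (P1): `f l` and `f (S₀ (S₁ l))` are in the same column. -/
def P1cond {M : ℕ} (S0 S1 : Equiv.Perm (Fin M)) (f : Fin M → ℕ × ℕ) : Prop :=
  ∀ l, (f (S0 (S1 l))).2 = (f l).2

/-- Condition (P2): `f l` and `f (S₂ l)` are in the same row. -/
def P2cond {M : ℕ} (S2 : Equiv.Perm (Fin M)) (f : Fin M → ℕ × ℕ) : Prop :=
  ∀ l, (f (S2 l)).1 = (f l).1

/-- `N²_{S₀,S₁,S₂}(λ)`: the number of functions from `[2k]` to the boxes of `2λ`
satisfying (P0), (P1), (P2). -/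
noncomputable def N2 {k n : ℕ} (S0 S1 S2 : Equiv.Perm (Fin (2*k))) (lam : n.Partition) : ℕ :=
  Nat.card {f : Fin (2*k) → ℕ × ℕ //
    InBoxes2 lam f ∧ P0cond S0 f ∧ P1cond S0 S1 f ∧ P2cond S2 f}

/-- `N̂²_{S₀,S₁,S₂}(λ)`: the number of injective such functions. -/
noncomputable def Nhat2 {k n : ℕ} (S0 S1 S2 : Equiv.Perm (Fin (2*k))) (lam : n.Partition) : ℕ :=
  Nat.card {f : Fin (2*k) → ℕ × ℕ //
    Function.Injective f ∧ InBoxes2 lam f ∧ P0cond S0 f ∧ P1cond S0 S1 f ∧ P2cond S2 f}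

/-- `N¹_{S₀,S₁,S₂}(λ)`: the number of functions from `[2k]` to the boxes of `λ` such that
`f∘S₀ = f`, `f(S₁ l)` is in the same column as `f l`, and `f(S₂ l)` is in the same row. -/
noncomputable def N1 {k n : ℕ} (S0 S1 S2 : Equiv.Perm (Fin (2*k))) (lam : n.Partition) : ℕ :=
  Nat.card {f : Fin (2*k) → ℕ × ℕ //
    (∀ l, (f l).2 < rowLen lam (f l).1) ∧ (∀ l, f (S0 l) = f l) ∧
    (∀ l, (f (S1 l)).2 = (f l).2) ∧ (∀ l, (f (S2 l)).1 = (f l).1)}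

/-- `T` is the pair-partition `S̃` of `[2n]` obtained from the pair-partition `S` of `[2k]`
by adjoining the pairs `{2k+1, 2k+2}, …, {2n-1, 2n}` (1-indexed). -/
def ExtendsPP {k n : ℕ} (S : Equiv.Perm (Fin (2*k))) (T : Equiv.Perm (Fin (2*n))) : Prop :=
  (∀ (x : Fin (2*k)) (y : Fin (2*n)), (x : ℕ) = (y : ℕ) → ((T y : ℕ) = (S x : ℕ))) ∧
  (∀ y : Fin (2*n), 2*k ≤ (y : ℕ) → ((T y : ℕ) = 2 * ((y : ℕ)/2) + (1 - (y : ℕ) % 2)))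

end ZonalPP

open Equiv Equiv.Perm MulAction Subgroup Function

namespace Equiv.Perm

variable {α : Type*}

theorem orbitRel_zpowers_iff (f : Perm α) {x y : α} :
    orbitRel (zpowers f) α x y ↔ f.SameCycle x y := by
  rw [sameCycle_comm]
  constructor
  · rintro ⟨⟨g, k, rfl⟩, hg⟩
    exact ⟨k, hg⟩
  · rintro ⟨k, hk⟩
    exact ⟨⟨f ^ k, k, rfl⟩, hk⟩

theorem exists_prodCongrLeft_eq {β : Type*} (f : Perm (α × β)) (hf : ∀ x, (f x).2 = x.2) :
    ∃ τ : β → Perm α, prodCongrLeft τ = f := by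
  have hf_inv : ∀ x, (f⁻¹ x).2 = x.2 := fun x => by simpa using (hf (f⁻¹ x)).symm
  have hfib : ∀ a b, ((f (a, b)).1, b) = f (a, b) := fun a b => Prod.ext rfl (hf (a, b)).symm
  have hfib_inv : ∀ a b, ((f⁻¹ (a, b)).1, b) = f⁻¹ (a, b) :=
    fun a b => Prod.ext rfl (hf_inv (a, b)).symm
  refine ⟨fun b => ⟨fun a => (f (a, b)).1, fun a => (f⁻¹ (a, b)).1, fun a => ?_, fun a => ?_⟩, ?_⟩
  · dsimp only
    rw [hfib, coe_inv, symm_apply_apply]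
  · dsimp only
    rw [hfib_inv, coe_inv, apply_symm_apply]
  · ext ⟨a, b⟩ : 1
    exact hfib a b

variable [Fintype α] [DecidableEq α]

noncomputable def orbitLabel (f : Perm α) (x : α) : fixedPoints f ⊕ f.cycleFactorsFinset :=
  if h : f x = x then .inl ⟨x, h⟩
  else .inr ⟨f.cycleOf x, cycleOf_mem_cycleFactorsFinset_iff.2 (mem_support.2 h)⟩

theorem orbitLabel_eq_iff (f : Perm α) {x y : α} :
    f.orbitLabel x = f.orbitLabel y ↔ f.SameCycle x y := by
  by_cases hx : f x = x <;> by_cases hy : f y = y <;>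
    simp only [orbitLabel, hx, hy, dite_true, dite_false, reduceCtorEq, false_iff,
      Sum.inl.injEq, Sum.inr.injEq, Subtype.mk.injEq]
  · exact ⟨fun h => by cases h; exact SameCycle.refl _ _, fun h => Subtype.ext (h.eq_of_left hx)⟩
  · exact fun h => hy (h.apply_eq_self_iff.1 hx)
  · exact fun h => hx (h.apply_eq_self_iff.2 hy)
  · exact (sameCycle_iff_cycleOf_eq_of_mem_support (mem_support.2 hx) (mem_support.2 hy)).symm

theorem orbitLabel_surjective (f : Perm α) : Surjective f.orbitLabel := by
  rintro (⟨x, hx⟩ | ⟨c, hc⟩)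
  · exact ⟨x, dif_pos hx⟩
  · obtain ⟨x, hx⟩ := (mem_cycleFactorsFinset_iff.1 hc).1.nonempty_support
    have hfx : f x ≠ x := mem_support.1 (mem_cycleFactorsFinset_support_le hc hx)
    exact ⟨x, by simp only [orbitLabel, dif_neg hfx, ← cycle_is_cycleOf hx hc]⟩

theorem nat_card_orbitRel_quotient_zpowers (f : Perm α) :
    Nat.card (orbitRel.Quotient (zpowers f) α) =
      Fintype.card (fixedPoints f) + Multiset.card f.cycleType := by
  have hker : orbitRel (zpowers f) α = Setoid.ker f.orbitLabel :=
    Setoid.ext fun _ _ => (orbitRel_zpowers_iff f).trans (orbitLabel_eq_iff f).symm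
  rw [orbitRel.Quotient, hker,
    Nat.card_congr (Setoid.quotientKerEquivOfSurjective _ (orbitLabel_surjective f)),
    Nat.card_sum, Nat.card_eq_fintype_card, Nat.card_eq_fintype_card, Fintype.card_coe,
    cycleType_def, Multiset.card_map]
  rfl

theorem sign_eq_neg_one_pow_card_sub_nat_card_orbits (f : Perm α) :
    sign f = (-1 : ℤˣ) ^ (Fintype.card α - Nat.card (orbitRel.Quotient (zpowers f) α)) := by
  have hsum := f.sum_cycleType_le
  have hcard : Multiset.card f.cycleType • 2 ≤ f.cycleType.sum :=
    Multiset.card_nsmul_le_sum fun _ => two_le_of_mem_cycleType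
  rw [smul_eq_mul] at hcard
  rw [nat_card_orbitRel_quotient_zpowers, card_fixedPoints, sign_of_cycleType]
  rw [show f.cycleType.sum + Multiset.card f.cycleType = Fintype.card α -
      (Fintype.card α - f.cycleType.sum + Multiset.card f.cycleType) +
        2 * Multiset.card f.cycleType by omega, pow_add, pow_mul]
  simp

end Equiv.Perm

theorem Setoid.nat_card_quotient_comap {X Y : Type*} {f : X → Y} (hf : Surjective f)
    (r : Setoid Y) : Nat.card (Quotient (r.comap f)) = Nat.card (Quotient r) := by
  rw [Nat.card_congr (Setoid.comapQuotientEquiv f r), (Quotient.mk''_surjective.comp hf).range_eq,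
    Nat.card_univ]

theorem MulAction.nat_card_orbitRel_quotient_map_permCongrHom {X Y : Type*} (e : X ≃ Y)
    (H : Subgroup (Perm X)) :
    Nat.card (orbitRel.Quotient (H.map e.permCongrHom.toMonoidHom) Y) =
      Nat.card (orbitRel.Quotient H X) := by
  refine (Nat.card_congr (Quotient.congr e fun x x' => ?_)).symm
  simp only [orbitRel_apply, mem_orbit_iff, Subtype.exists, Subgroup.mem_map, Subgroup.mk_smul,
    Perm.smul_def]
  constructor
  · rintro ⟨g, hg, rfl⟩
    exact ⟨e.permCongr g, ⟨g, hg, rfl⟩, by simp⟩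
  · rintro ⟨_, ⟨g, hg, rfl⟩, hgx⟩
    exact ⟨g, hg, by simpa using hgx⟩

namespace ZonalPP

variable {α : Type*}

def fiberSwap : Perm (α × Fin 2) := prodCongrRight fun _ => swap 0 1

theorem orbitRel_closure_conj_fiberSwap_iff [Finite α] (τ : Fin 2 → Perm α) (x y : α × Fin 2) :
    orbitRel (closure {prodCongrLeft τ * fiberSwap * (prodCongrLeft τ)⁻¹, fiberSwap}) _ x y ↔
      (τ 0 * (τ 1)⁻¹).SameCycle x.1 y.1 := by
  set A := prodCongrLeft τ * fiberSwap * (prodCongrLeft τ)⁻¹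
  set G := closure {A, fiberSwap}
  set ρ := τ 0 * (τ 1)⁻¹
  have hA0 : ∀ a, A (a, 0) = (ρ⁻¹ a, 1) := fun a => by simp [A, ρ, fiberSwap]
  have hA1 : ∀ a, A (a, 1) = (ρ a, 0) := fun a => by simp [A, ρ, fiberSwap]
  have hA_mem : A ∈ G := subset_closure (Set.mem_insert _ _)
  have hS_mem : fiberSwap ∈ G := subset_closure (Set.mem_insert_of_mem _ rfl)
  have rel_of_mem : ∀ g ∈ G, ∀ z, orbitRel G _ (g z) z := fun g hg z => ⟨⟨g, hg⟩, rfl⟩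
  constructor
  · have hG : ∀ g ∈ G, ∀ z : α × Fin 2, ρ.SameCycle z.1 (g z).1 := by
      intro g hg
      induction hg using closure_induction with
      | mem g hg =>
        simp only [Prod.forall, Fin.forall_fin_two]
        rcases hg with rfl | rfl
        · refine fun a => ⟨?_, ?_⟩
          · rw [hA0]
            exact ⟨-1, by rw [zpow_neg_one]⟩
          · rw [hA1]
            exact ⟨1, by rw [zpow_one]⟩
        · exact fun a => ⟨SameCycle.refl _ _, SameCycle.refl _ _⟩
      | one => exact fun z => SameCycle.refl _ _
      | mul g h _ _ hg hh => exact fun z => (hh z).trans (hg (h z))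
      | inv g _ hg => exact fun z => by simpa using (hg (g⁻¹ z)).symm
    rintro ⟨⟨g, hg⟩, rfl⟩
    exact (hG g hg y).symm
  · intro h
    have hfiber : ∀ a j, orbitRel G (α × Fin 2) (a, j) (a, 1) := fun a => Fin.forall_fin_two.2
      ⟨by simpa [fiberSwap] using rel_of_mem _ hS_mem (a, 1), Setoid.refl' _ _⟩
    have hstep : ∀ a, orbitRel G (α × Fin 2) (ρ a, 1) (a, 1) := fun a => by
      simpa [hA1, fiberSwap] using rel_of_mem _ (mul_mem hS_mem hA_mem) (a, 1)
    have hpow : ∀ (i : ℕ) a, orbitRel G (α × Fin 2) ((ρ ^ i) a, 1) (a, 1) := by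
      intro i
      induction i with
      | zero => exact fun a => Setoid.refl' _ _
      | succ i ih =>
        intro a
        rw [pow_succ', mul_apply]
        exact Setoid.trans' _ (hstep _) (ih a)
    obtain ⟨a, j⟩ := x
    obtain ⟨b, k⟩ := y
    obtain ⟨i, rfl⟩ := h.exists_nat_pow_eq
    exact Setoid.trans' _ (hfiber a j)
      (Setoid.trans' _ (Setoid.symm' _ (hpow i a)) (Setoid.symm' _ (hfiber _ k)))

theorem nat_card_loops_conj_fiberSwap [Finite α] (τ : Fin 2 → Perm α) :
    Nat.card (orbitRel.Quotient
        (closure {prodCongrLeft τ * fiberSwap * (prodCongrLeft τ)⁻¹, fiberSwap}) (α × Fin 2)) =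
      Nat.card (orbitRel.Quotient (zpowers (τ 0 * (τ 1)⁻¹)) α) := by
  have hcomap : orbitRel (closure {prodCongrLeft τ * fiberSwap * (prodCongrLeft τ)⁻¹, fiberSwap})
      (α × Fin 2) = (orbitRel (zpowers (τ 0 * (τ 1)⁻¹)) α).comap Prod.fst :=
    Setoid.ext fun x y => (orbitRel_closure_conj_fiberSwap_iff τ x y).trans
      ((Setoid.comap_rel _ _ x y).trans (orbitRel_zpowers_iff _)).symm
  rw [orbitRel.Quotient, hcomap, Setoid.nat_card_quotient_comap Prod.fst_surjective]

def pairIndex (n : ℕ) : Fin n × Fin 2 ≃ Fin (2 * n) :=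
  finProdFinEquiv.trans (finCongr (mul_comm n 2))

theorem pairIndex_apply_val {n : ℕ} (x : Fin n × Fin 2) : (pairIndex n x : ℕ) = x.2 + 2 * x.1 :=
  rfl

theorem pairIndex_symm_snd_val {n : ℕ} (t : Fin (2 * n)) :
    (((pairIndex n).symm t).2 : ℕ) = t % 2 := by
  conv_rhs => rw [← (pairIndex n).apply_symm_apply t, pairIndex_apply_val]
  omega

theorem firstPP_eq_permCongr (n : ℕ) : firstPP n = (pairIndex n).permCongr fiberSwap := by
  ext t : 1
  obtain ⟨⟨a, j⟩, rfl⟩ := (pairIndex n).surjective t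
  rw [permCongr_apply, symm_apply_apply]
  apply Fin.ext
  fin_cases j <;> simp [firstPP, pairIndex_apply_val, fiberSwap] <;> omega

theorem sign_eq_neg_one_pow_sub_numLoops_of_mod_two {n : ℕ} (σ : Perm (Fin (2 * n)))
    (hσ : ∀ t, (σ t : ℕ) % 2 = t % 2) :
    sign σ = (-1 : ℤˣ) ^ (n - numLoops (σ * firstPP n * σ⁻¹) (firstPP n)) := by
  let φ := (pairIndex n).permCongrHom.toMonoidHom
  obtain ⟨τ, hτ⟩ := exists_prodCongrLeft_eq ((pairIndex n).symm.permCongr σ) fun x => Fin.ext <| by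
    rw [permCongr_apply, symm_symm, pairIndex_symm_snd_val, hσ, pairIndex_apply_val]
    omega
  replace hτ : φ (prodCongrLeft τ) = σ := by
    rw [hτ]
    ext
    simp [φ]
  have hS : φ fiberSwap = firstPP n := (firstPP_eq_permCongr n).symm
  have hloops : numLoops (σ * firstPP n * σ⁻¹) (firstPP n) =
      Nat.card (orbitRel.Quotient (zpowers (τ 0 * (τ 1)⁻¹)) (Fin n)) := by
    rw [← hτ, ← hS, ← map_inv, ← map_mul, ← map_mul, numLoops, Loops, ← Set.image_pair,
      ← MonoidHom.map_closure, nat_card_orbitRel_quotient_map_permCongrHom,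
      nat_card_loops_conj_fiberSwap]
  have hρ := sign_eq_neg_one_pow_card_sub_nat_card_orbits (τ 0 * (τ 1)⁻¹)
  rw [Fintype.card_fin] at hρ
  rw [hloops, ← hρ, ← hτ, MulEquiv.coe_toMonoidHom, permCongrHom_coe, sign_permCongr,
    sign_prodCongrLeft, Fin.prod_univ_two, map_mul, map_inv, Int.units_inv_eq_self]

/-- Boxes of `2λ` are numbered consecutively along the rows (the functions
`row, col` give the coordinates of the box with a given number, which characterizes the
numbering uniquely). If a permutation `σ` of the boxes preserves each column, then its sign
is `(-1) ^ (n - |L(σ·S, S)|)`, where `S` is the first pair-partition. -/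
theorem statement1 {n : ℕ} (lam : Nat.Partition n) (row col : Fin (2*n) → ℕ)
    (hT : ∀ t, col t < 2 * rowLen lam (row t) ∧
      (∑ r ∈ Finset.range (row t), 2 * rowLen lam r) + col t = (t : ℕ))
    (σ : Equiv.Perm (Fin (2*n)))
    (hσ : ∀ t, col (σ t) = col t) :
    Equiv.Perm.sign σ = (-1 : ℤˣ) ^ (n - numLoops (σ * firstPP n * σ⁻¹) (firstPP n)) := by
  have hmod : ∀ t : Fin (2 * n), (t : ℕ) % 2 = col t % 2 := fun t => by
    rw [← (hT t).2, ← Finset.mul_sum]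
    omega
  refine sign_eq_neg_one_pow_sub_numLoops_of_mod_two σ fun t => ?_
  rw [hmod, hσ, ← hmod]

end ZonalPP
end

section
/- Let μ be a partition of n and let (S₁,S₂) be a couple of pair-partitions of [2n] of type μ. Then the simultaneous centralizer {σ ∈ S_{2n} : σ∘S₁∘σ⁻¹ = S₁ and σ∘S₂∘σ⁻¹ = S₂} has cardinality exactly z_μ · 2^{ℓ(μ)}. -/
open scoped BigOperators

/-! The subgroup `H = ⟨a, b⟩` generated by two fixed-point-free involutions is dihedral, with
rotation `c = a * b`, and each reflection `c ^ k * a` is conjugate to `a` or to `b`, hence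
fixed-point free. Consequently the `H`-orbit of `x` is `⟨c⟩ x ⊔ a '' ⟨c⟩ x`, of size twice the
`c`-period `p` of `x`, and the stabilizer of `x` consists of the powers `c ^ k` with `p ∣ k`: it
depends only on the size of the orbit. For an action with this property, a permutation commuting
with it amounts to a size-preserving permutation of the orbits together with the image of one base
point of each orbit, so there are `∏ᵢ mᵢ! · ∏_q |q|` of them. For loops of sizes `2μⱼ` this is
`z_μ · 2 ^ ℓ(μ)`. -/

namespace ZonalPP

open MulAction Function

def prodCountFactorial {β : Type*} [DecidableEq β] (s : Multiset β) : ℕ :=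
  ∏ i ∈ s.toFinset, (s.count i).factorial

theorem prodCountFactorial_map_of_injective {β γ : Type*} [DecidableEq β] [DecidableEq γ]
    {f : β → γ} (hf : Injective f) (s : Multiset β) :
    prodCountFactorial (s.map f) = prodCountFactorial s := by
  simp only [prodCountFactorial, Multiset.toFinset_map, Finset.prod_image hf.injOn,
    Multiset.count_map_eq_count' f s hf]

theorem prod_map_two_mul (s : Multiset ℕ) :
    (s.map (2 * ·)).prod = 2 ^ Multiset.card s * s.prod := by
  rw [Multiset.prod_map_mul, Multiset.map_const', Multiset.prod_replicate, Multiset.map_id']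

section EquivariantPerm

variable {G α : Type*} [Group G] [MulAction G α]

local notation "Q" => orbitRel.Quotient G α

theorem smul_eq_smul_iff_of_stabilizer_eq {x y : α} (h : stabilizer G x = stabilizer G y)
    {g g' : G} : g • x = g' • x ↔ g • y = g' • y := by
  simp only [← inv_smul_eq_iff, smul_smul, ← mem_stabilizer_iff, h]

theorem orbit_apply_eq_image {σ : Equiv.Perm α} (hσ : ∀ (g : G) x, σ (g • x) = g • σ x)
    (x : α) : orbit G (σ x) = σ '' orbit G x := by
  simp only [orbit, ← Set.range_comp, comp_def, hσ]

theorem exists_smul_out_eq (x : α) : ∃ g : G, g • (⟦x⟧ : Q).out = x :=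
  orbitRel_apply.mp (Quotient.exact (Quotient.out_eq _).symm)

theorem orbit_out (q : Q) : q.orbit = orbit G q.out :=
  orbitRel.Quotient.orbit_eq_orbit_out q Quotient.out_eq'

variable (G α) in
/-- Possible images of the orbit representatives `q.out` under a permutation commuting with
the action. -/
def OrbitMatching : Type _ :=
  {y : Q → α // Injective (fun q => (⟦y q⟧ : Q)) ∧
    ∀ q, Nat.card (orbit G (y q)) = Nat.card q.orbit}

variable [Finite α]

theorem exists_equivariantPerm_apply_out
    (hstab : ∀ x y : α, Nat.card (orbit G x) = Nat.card (orbit G y) →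
      stabilizer G x = stabilizer G y) (y : OrbitMatching G α) :
    ∃ σ : Equiv.Perm α, (∀ (g : G) x, σ (g • x) = g • σ x) ∧ ∀ q, σ q.out = y.1 q := by
  obtain ⟨y, hinj, hsize⟩ := y
  have hstab_out (q : Q) : stabilizer G q.out = stabilizer G (y q) :=
    hstab _ _ (by rw [← orbit_out, hsize])
  choose r hr using fun x : α => exists_smul_out_eq (G := G) x
  set f : α → α := fun x => r x • y ⟦x⟧
  -- the choice of `r x` does not matter, as `q.out` and `y q` have the same stabilizer
  have hf (x : α) (g : G) (hg : g • (⟦x⟧ : Q).out = x) : f x = g • y ⟦x⟧ :=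
    (smul_eq_smul_iff_of_stabilizer_eq (hstab_out _)).mp ((hr x).trans hg.symm)
  have hf_smul (g : G) (x : α) : f (g • x) = g • f x := by
    have hq : (⟦g • x⟧ : Q) = ⟦x⟧ := orbitRel.Quotient.quotient_smul_eq
    rw [hf (g • x) (g * r x) (by rw [hq, mul_smul, hr]), hq, mul_smul]
  have hf_inj : Injective f := by
    intro x x' hxx'
    have hq : (⟦x⟧ : Q) = ⟦x'⟧ := hinj <| by
      simpa only [f, orbitRel.Quotient.quotient_smul_eq] using congrArg (⟦·⟧ : α → Q) hxx'
    have hx' := hr x'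
    simp only [f, ← hq] at hx' hxx'
    rw [← hr x, ← hx', smul_eq_smul_iff_of_stabilizer_eq (hstab_out _)]
    exact hxx'
  refine ⟨Equiv.ofBijective f (Finite.injective_iff_bijective.mp hf_inj), hf_smul, fun q => ?_⟩
  change f q.out = y q
  rw [hf q.out 1 (by rw [Quotient.out_eq, one_smul]), one_smul, Quotient.out_eq]

theorem card_equivariantPerm_eq_card_orbitMatching
    (hstab : ∀ x y : α, Nat.card (orbit G x) = Nat.card (orbit G y) →
      stabilizer G x = stabilizer G y) :
    Nat.card {σ : Equiv.Perm α // ∀ (g : G) x, σ (g • x) = g • σ x} =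
      Nat.card (OrbitMatching G α) := by
  refine Nat.card_eq_of_bijective
    (fun σ => ⟨fun q => σ.1 q.out, fun q q' h => ?_, fun q => ?_⟩) ⟨?_, fun y => ?_⟩
  · obtain ⟨g, hg⟩ := Quotient.exact h
    dsimp only at hg
    rw [← σ.2, σ.1.injective.eq_iff] at hg
    rw [← Quotient.out_eq q, ← Quotient.out_eq q', ← hg]
    exact Quotient.sound ⟨g, rfl⟩
  · rw [orbit_apply_eq_image σ.2, Nat.card_image_of_injective σ.1.injective, orbit_out]
  · rintro ⟨σ, hσ⟩ ⟨τ, hτ⟩ h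
    refine Subtype.ext (Equiv.ext fun x => ?_)
    obtain ⟨g, hg⟩ := exists_smul_out_eq (G := G) x
    dsimp only at hg ⊢
    rw [← hg, hσ, hτ]
    exact congrArg (g • ·) (congrFun (congrArg Subtype.val h) _)
  · obtain ⟨σ, hσ, hσy⟩ := exists_equivariantPerm_apply_out hstab y
    exact ⟨⟨σ, hσ⟩, Subtype.ext (funext hσy)⟩

variable (G α) in
noncomputable def orbitSizes : Multiset ℕ :=
  (Finset.univ : Finset Q).val.map fun q => Nat.card q.orbit

theorem card_orbitMatching_eq_card_prod :
    Nat.card (OrbitMatching G α) =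
      Nat.card ({π : Equiv.Perm Q // (fun q : Q => Nat.card q.orbit) ∘ π =
        fun q => Nat.card q.orbit} × ((q : Q) → q.orbit)) := by
  have hmk (π : Equiv.Perm Q) (w : (q : Q) → q.orbit) :
      (fun q => (⟦(w (π q)).1⟧ : Q)) = π :=
    funext fun q => orbitRel.Quotient.mem_orbit.mp (w (π q)).2
  symm
  refine Nat.card_eq_of_bijective
    (fun p => ⟨fun q => p.2 (p.1.1 q), ?_, fun q => ?_⟩) ⟨?_, ?_⟩
  · rw [hmk]
    exact p.1.1.injective
  · change Nat.card (orbitRel.Quotient.orbit (⟦_⟧ : Q)) = _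
    rw [congrFun (hmk _ _) q]
    exact congrFun p.1.2 q
  · rintro ⟨⟨π, hπ⟩, w⟩ ⟨⟨π', hπ'⟩, w'⟩ h
    have hval (q : Q) : (w (π q)).1 = (w' (π' q)).1 :=
      congrFun (congrArg Subtype.val h) q
    obtain rfl : π = π' := Equiv.ext fun q => by
      rw [← congrFun (hmk π w) q, ← congrFun (hmk π' w') q, hval]
    obtain rfl : w = w' := funext fun q => by
      obtain ⟨q, rfl⟩ := π.surjective q
      exact Subtype.ext (hval q)
    rfl
  · rintro ⟨y, hinj, hsize⟩
    set π := Equiv.ofBijective _ (Finite.injective_iff_bijective.mp hinj)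
    refine ⟨⟨⟨π, funext hsize⟩, fun q => ⟨y (π.symm q), ?_⟩⟩, ?_⟩
    · exact orbitRel.Quotient.mem_orbit.mpr (π.apply_symm_apply q)
    · exact Subtype.ext (funext fun q => congrArg y (π.symm_apply_apply q))

theorem card_orbitMatching :
    Nat.card (OrbitMatching G α) =
      (orbitSizes G α).prod * prodCountFactorial (orbitSizes G α) := by
  classical
  rw [card_orbitMatching_eq_card_prod, Nat.card_prod, Nat.card_pi,
    Nat.card_eq_fintype_card (α := {π // _}), DomMulAct.stabilizer_card', mul_comm, orbitSizes,
    prodCountFactorial, Finset.prod_eq_multiset_prod]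
  congr 1
  refine Finset.prod_congr rfl fun i _ => ?_
  rw [Fintype.card_subtype, Multiset.count_map, Finset.card_def, Finset.filter_val]
  simp only [eq_comm]

end EquivariantPerm

theorem mem_orbit_subgroup_iff {α : Type*} {H : Subgroup (Equiv.Perm α)} {x y : α} :
    y ∈ orbit H x ↔ ∃ h ∈ H, h x = y := by
  simp only [mem_orbit_iff, Subtype.exists, Subgroup.mk_smul, Equiv.Perm.smul_def, exists_prop]

theorem equivariant_closure_iff {α : Type*} {S : Set (Equiv.Perm α)} {σ : Equiv.Perm α} :
    (∀ (g : Subgroup.closure S) (x : α), σ (g • x) = g • σ x) ↔ ∀ s ∈ S, σ * s * σ⁻¹ = s := by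
  calc (∀ (g : Subgroup.closure S) (x : α), σ (g • x) = g • σ x)
      ↔ Subgroup.closure S ≤ Subgroup.centralizer {σ} := by
        simp only [SetLike.le_def, Subgroup.mem_centralizer_singleton_iff, Subtype.forall,
          Subgroup.mk_smul, Equiv.Perm.smul_def, Equiv.Perm.ext_iff, Equiv.Perm.mul_apply, eq_comm]
    _ ↔ ∀ s ∈ S, σ * s * σ⁻¹ = s := by
        simp only [Subgroup.closure_le, Set.subset_def, SetLike.mem_coe,
          Subgroup.mem_centralizer_singleton_iff, mul_inv_eq_iff_eq_mul]
        exact forall₂_congr fun _ _ => eq_comm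

section Dihedral

variable {α : Type*} {a b : Equiv.Perm α}

theorem mul_self_eq_one_of_involutive (ha : Involutive a) : a * a = 1 :=
  Equiv.ext ha

theorem inv_eq_self_of_involutive (ha : Involutive a) : a⁻¹ = a :=
  inv_eq_of_mul_eq_one_right (mul_self_eq_one_of_involutive ha)

theorem conj_apply_ne_self {s : Equiv.Perm α} (hs : ∀ x, s x ≠ x) (g : Equiv.Perm α) (x : α) :
    (g * s * g⁻¹) x ≠ x :=
  fun h => hs (g⁻¹ x) (Equiv.Perm.eq_inv_iff_eq.mpr h)

theorem mul_zpow_eq_zpow_neg_mul (ha : Involutive a) (hb : Involutive b) (k : ℤ) :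
    a * (a * b) ^ k = (a * b) ^ (-k) * a := by
  have hconj : a * (a * b) * a⁻¹ = (a * b)⁻¹ := by
    calc a * (a * b) * a⁻¹ = (a * a⁻¹) * b * a⁻¹ := by rw [inv_eq_self_of_involutive ha]; group
      _ = (a * b)⁻¹ := by
        rw [mul_inv_cancel, one_mul, mul_inv_rev, inv_eq_self_of_involutive hb]
  rw [← mul_inv_eq_iff_eq_mul, ← conj_zpow, hconj, inv_zpow']

theorem exists_eq_zpow_or_eq_zpow_mul_of_mem_closure (ha : Involutive a) (hb : Involutive b)
    {h : Equiv.Perm α} (hh : h ∈ Subgroup.closure {a, b}) :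
    ∃ k : ℤ, h = (a * b) ^ k ∨ h = (a * b) ^ k * a := by
  have hgen : ∀ x ∈ ({a, b} : Set (Equiv.Perm α)), x⁻¹ = x ∧ ∃ j : ℤ, x = (a * b) ^ j * a := by
    rintro x (rfl | rfl)
    · exact ⟨inv_eq_self_of_involutive ha, 0, by rw [zpow_zero, one_mul]⟩
    · refine ⟨inv_eq_self_of_involutive hb, -1, ?_⟩
      rw [zpow_neg_one, mul_inv_rev, inv_mul_cancel_right, inv_eq_self_of_involutive hb]
  have hstep (j : ℤ) (y : Equiv.Perm α) (hy : ∃ k : ℤ, y = (a * b) ^ k ∨ y = (a * b) ^ k * a) :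
      ∃ k : ℤ, (a * b) ^ j * a * y = (a * b) ^ k ∨ (a * b) ^ j * a * y = (a * b) ^ k * a := by
    obtain ⟨k, rfl | rfl⟩ := hy
    · refine ⟨j - k, Or.inr ?_⟩
      rw [mul_assoc, mul_zpow_eq_zpow_neg_mul ha hb, ← mul_assoc, ← zpow_add, sub_eq_add_neg]
    · refine ⟨j - k, Or.inl ?_⟩
      rw [mul_assoc, ← mul_assoc a, mul_zpow_eq_zpow_neg_mul ha hb, mul_assoc, ← mul_assoc,
        ← zpow_add, ← sub_eq_add_neg, mul_self_eq_one_of_involutive ha, mul_one]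
  induction hh using Subgroup.closure_induction_left with
  | one => exact ⟨0, Or.inl (zpow_zero _).symm⟩
  | mul_left x hx y _ ih =>
    obtain ⟨-, j, rfl⟩ := hgen x hx
    exact hstep j y ih
  | inv_mul_cancel x hx y _ ih =>
    obtain ⟨hinv, j, rfl⟩ := hgen x hx
    rw [hinv]
    exact hstep j y ih

theorem zpow_mul_apply_ne_self (ha : Involutive a) (fa : ∀ x, a x ≠ x)
    (hb : Involutive b) (fb : ∀ x, b x ≠ x) (k : ℤ) (x : α) : ((a * b) ^ k * a) x ≠ x := by
  obtain ⟨t, rfl | rfl⟩ := Int.even_or_odd' k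
  · have : (a * b) ^ (2 * t) * a = (a * b) ^ t * a * ((a * b) ^ t)⁻¹ := by
      rw [mul_assoc, ← zpow_neg, mul_zpow_eq_zpow_neg_mul ha hb, neg_neg, ← mul_assoc,
        ← zpow_add, two_mul]
    rw [this]
    exact conj_apply_ne_self fa _ x
  · have : (a * b) ^ (2 * t + 1) * a = (a * b) ^ t * a * b * ((a * b) ^ t * a)⁻¹ := by
      calc (a * b) ^ (2 * t + 1) * a = (a * b) ^ (t + 1) * (a * (a * b) ^ (-t)) := by
            rw [mul_zpow_eq_zpow_neg_mul ha hb, neg_neg, ← mul_assoc, ← zpow_add]; ring_nf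
        _ = (a * b) ^ t * a * b * ((a * b) ^ t * a)⁻¹ := by
            rw [zpow_add_one, zpow_neg, mul_inv_rev, inv_eq_self_of_involutive ha]; group
    rw [this]
    exact conj_apply_ne_self fb _ x

theorem mem_orbit_zpowers_iff {c : Equiv.Perm α} {x y : α} :
    y ∈ orbit (Subgroup.zpowers c) x ↔ ∃ k : ℤ, (c ^ k) x = y := by
  simp only [mem_orbit_subgroup_iff, Subgroup.mem_zpowers_iff, exists_exists_eq_and]

theorem orbit_closure_pair_eq (ha : Involutive a) (hb : Involutive b) (x : α) :
    orbit (Subgroup.closure {a, b}) x =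
      orbit (Subgroup.zpowers (a * b)) x ∪ a '' orbit (Subgroup.zpowers (a * b)) x := by
  have ha_mem : a ∈ Subgroup.closure {a, b} := Subgroup.subset_closure (by simp)
  have hc_mem : a * b ∈ Subgroup.closure {a, b} :=
    mul_mem ha_mem (Subgroup.subset_closure (by simp))
  ext y
  simp only [Set.mem_union, Set.mem_image, mem_orbit_zpowers_iff]
  rw [mem_orbit_subgroup_iff]
  constructor
  · rintro ⟨h, hh, rfl⟩
    obtain ⟨k, rfl | rfl⟩ := exists_eq_zpow_or_eq_zpow_mul_of_mem_closure ha hb hh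
    · exact Or.inl ⟨k, rfl⟩
    · refine Or.inr ⟨((a * b) ^ (-k)) x, ⟨-k, rfl⟩, ?_⟩
      rw [← Equiv.Perm.mul_apply, mul_zpow_eq_zpow_neg_mul ha hb, neg_neg]
  · rintro (⟨k, rfl⟩ | ⟨_, ⟨k, rfl⟩, rfl⟩)
    · exact ⟨_, zpow_mem hc_mem k, rfl⟩
    · exact ⟨_, mul_mem ha_mem (zpow_mem hc_mem k), rfl⟩

variable [Finite α]

theorem card_orbit_zpowers (c : Equiv.Perm α) (x : α) :
    Nat.card (orbit (Subgroup.zpowers c) x) = minimalPeriod c x := by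
  have := Fintype.ofFinite α
  classical
  rw [Nat.card_eq_fintype_card, ← minimalPeriod_eq_card]
  rfl

theorem card_orbit_closure_pair (ha : Involutive a) (fa : ∀ x, a x ≠ x)
    (hb : Involutive b) (fb : ∀ x, b x ≠ x) (x : α) :
    Nat.card (orbit (Subgroup.closure {a, b}) x) = 2 * minimalPeriod (a * b) x := by
  have hdisj : Disjoint (orbit (Subgroup.zpowers (a * b)) x)
      (a '' orbit (Subgroup.zpowers (a * b)) x) := by
    rw [Set.disjoint_left]
    rintro _ hk ⟨_, hj, hjk⟩
    obtain ⟨k, rfl⟩ := mem_orbit_zpowers_iff.mp hk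
    obtain ⟨j, rfl⟩ := mem_orbit_zpowers_iff.mp hj
    apply zpow_mul_apply_ne_self ha fa hb fb (-k - j) x
    calc ((a * b) ^ (-k - j) * a) x = ((a * b) ^ (-k) * (a * (a * b) ^ j)) x := by
          rw [mul_zpow_eq_zpow_neg_mul ha hb, ← mul_assoc, ← zpow_add, sub_eq_add_neg]
      _ = x := by
          rw [Equiv.Perm.mul_apply, Equiv.Perm.mul_apply, hjk, ← Equiv.Perm.mul_apply,
            ← zpow_add, neg_add_cancel, zpow_zero, Equiv.Perm.one_apply]
  rw [orbit_closure_pair_eq ha hb, Nat.card_coe_set_eq, Set.ncard_union_eq hdisj,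
    Set.ncard_image_of_injective _ a.injective, ← Nat.card_coe_set_eq, card_orbit_zpowers,
    two_mul]

theorem stabilizer_closure_pair_eq_of_card_orbit_eq (ha : Involutive a) (fa : ∀ x, a x ≠ x)
    (hb : Involutive b) (fb : ∀ x, b x ≠ x) {x y : α}
    (hxy : Nat.card (orbit (Subgroup.closure {a, b}) x) =
      Nat.card (orbit (Subgroup.closure {a, b}) y)) :
    stabilizer (Subgroup.closure {a, b}) x = stabilizer (Subgroup.closure {a, b}) y := by
  rw [card_orbit_closure_pair ha fa hb fb, card_orbit_closure_pair ha fa hb fb,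
    Nat.mul_left_cancel_iff two_pos] at hxy
  ext ⟨h, hh⟩
  simp only [mem_stabilizer_iff, Subgroup.mk_smul, Equiv.Perm.smul_def]
  obtain ⟨k, rfl | rfl⟩ := exists_eq_zpow_or_eq_zpow_mul_of_mem_closure ha hb hh
  · have hfix (z : α) : ((a * b) ^ k) z = z ↔ (minimalPeriod (a * b) z : ℤ) ∣ k :=
      zpow_smul_eq_iff_minimalPeriod_dvd (a := a * b) (b := z) (n := k)
    rw [hfix, hfix, hxy]
  · exact iff_of_false (zpow_mul_apply_ne_self ha fa hb fb k x)
      (zpow_mul_apply_ne_self ha fa hb fb k y)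

end Dihedral

theorem orbitSizes_eq_map_loopType {N : ℕ} {a b : Equiv.Perm (Fin N)}
    (ha : Involutive a) (fa : ∀ x, a x ≠ x) (hb : Involutive b) (fb : ∀ x, b x ≠ x) :
    orbitSizes (Subgroup.closure {a, b}) (Fin N) = (loopType a b).map (2 * ·) := by
  rw [loopType, Multiset.map_map]
  refine Multiset.map_congr rfl fun q _ => ?_
  have := card_orbit_closure_pair ha fa hb fb q.out
  rw [← orbit_out] at this
  simp only [comp_apply, loopSet, this]
  omega

/-- The simultaneous centralizer of a couple of pair-partitions of type `μ`
has cardinality `z_μ · 2^{ℓ(μ)}`. -/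
theorem statement4 {n : ℕ} (μ : Nat.Partition n) (S1 S2 : Equiv.Perm (Fin (2*n)))
    (h1 : IsPairPartition S1) (h2 : IsPairPartition S2)
    (hμ : loopType S1 S2 = μ.parts) :
    Nat.card {σ : Equiv.Perm (Fin (2*n)) // σ * S1 * σ⁻¹ = S1 ∧ σ * S2 * σ⁻¹ = S2} =
      zMu μ * 2 ^ μ.parts.card := by
  obtain ⟨ha, fa⟩ := h1
  obtain ⟨hb, fb⟩ := h2
  calc Nat.card {σ : Equiv.Perm (Fin (2*n)) // σ * S1 * σ⁻¹ = S1 ∧ σ * S2 * σ⁻¹ = S2}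
      = Nat.card {σ : Equiv.Perm (Fin (2*n)) //
          ∀ (g : Subgroup.closure {S1, S2}) x, σ (g • x) = g • σ x} :=
        Nat.card_congr <| Equiv.subtypeEquivRight fun σ => by
          simp only [equivariant_closure_iff, Set.mem_insert_iff, Set.mem_singleton_iff,
            forall_eq_or_imp, forall_eq]
    _ = (orbitSizes _ _).prod * prodCountFactorial (orbitSizes _ _) := by
        rw [card_equivariantPerm_eq_card_orbitMatching
          (fun _ _ => stabilizer_closure_pair_eq_of_card_orbit_eq ha fa hb fb), card_orbitMatching]
    _ = zMu μ * 2 ^ μ.parts.card := by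
        rw [orbitSizes_eq_map_loopType ha fa hb fb, hμ, prod_map_two_mul,
          prodCountFactorial_map_of_injective (mul_right_injective₀ two_ne_zero), zMu,
          prodCountFactorial]
        ring

end ZonalPP
end

section
/- Let d, n ≥ 1, let X be a real d×d matrix and set A = X·Xᵀ. Let P be a pair-partition of [2n] and let S be the first pair-partition of [2n] (pairing 2i−1 with 2i). Then the sum, over all functions i : {1,…,2n} → {1,…,d} satisfying i∘P = i, of the products ∏_{k=1}^{n} A_{i(2k−1), i(2k)}, equals the product over the loops O ∈ L(P,S) of Tr(A^{|O|/2}), where |O| denotes the (even) cardinality of the orbit O. -/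
open scoped BigOperators

/-! Both the constraint `i ∘ P = i` and the weight `∏ A_{i x, i (S x)}` (one factor per
`S`-pair) are local to the loops of `(P, S)`, so the sum factorizes over the loops. A loop of
size `2m` is the `P * S`-cycle of any of its points together with the image of that cycle under
`P`; the two are disjoint because `P` and `S` have no fixed points. Indexing the loop by
`ℤ/m ⊕ ℤ/m`, a `P`-invariant labelling is a single `u : ℤ/m → [d]`, and by the symmetry of
`A = X Xᵀ` its weight is `∏ₖ A_{u k, u (k+1)}`, whose sum over `u` is `Tr (A ^ m)`. -/

open Finset Function Equiv MulAction

namespace Matrix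

variable {n R : Type*} [Fintype n] [DecidableEq n] [CommSemiring R]

theorem trace_pow_mul_eq_sum_prod (A : Matrix n n R) (t : ℕ) (B : Matrix n n R) :
    (A ^ t * B).trace =
      ∑ v : Fin (t + 1) → n,
        (∏ k : Fin t, A (v k.castSucc) (v k.succ)) * B (v (Fin.last t)) (v 0) := by
  induction t generalizing B with
  | zero => exact Fintype.sum_equiv (Equiv.funUnique (Fin 1) n).symm _ _ (by simp)
  | succ t ih =>
    rw [pow_succ, mul_assoc, ih]
    conv_rhs => rw [← (Fin.snocEquiv fun _ => n).sum_comp, Fintype.sum_prod_type_right]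
    refine sum_congr rfl fun v _ => ?_
    simp [Fin.prod_univ_castSucc, mul_apply, mul_sum, Fin.succ_castSucc, -Fin.castSucc_succ,
      mul_assoc]

theorem trace_pow_eq_sum_prod_zmod (A : Matrix n n R) (m : ℕ) [NeZero m] :
    (A ^ m).trace = ∑ v : ZMod m → n, ∏ k, A (v k) (v (k + 1)) := by
  obtain ⟨t, rfl⟩ := Nat.exists_eq_succ_of_ne_zero (NeZero.ne m)
  rw [← mul_one (A ^ _), pow_succ, mul_assoc, mul_one, trace_pow_mul_eq_sum_prod]
  refine sum_congr rfl fun v _ => ?_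
  change _ = ∏ k : Fin (t + 1), A (v k) (v (k + 1))
  simp only [Fin.prod_univ_castSucc, Fin.coeSucc_eq_succ, Fin.last_add_one]

end Matrix

namespace ZonalPP

section Loops

variable {α : Type*} {P S : Perm α}

abbrev pairGroup (P S : Perm α) : Subgroup (Perm α) := Subgroup.closure {P, S}

def pairGroup.left (P S : Perm α) : pairGroup P S := ⟨P, Subgroup.subset_closure (by simp)⟩

def pairGroup.right (P S : Perm α) : pairGroup P S := ⟨S, Subgroup.subset_closure (by simp)⟩

theorem involutive_mul_zpow_apply (hP : Involutive P) (hS : Involutive S) (k : ℤ) (x : α) :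
    P (((P * S) ^ k) x) = ((P * S) ^ (-k)) (P x) := by
  have h : SemiconjBy P (P * S) (P * S)⁻¹ := by
    ext y
    simp [Perm.inv_def, hP.symm_eq_self_of_involutive, hS.symm_eq_self_of_involutive, hP _]
  have hk := DFunLike.congr_fun (h.zpow_right k) x
  rwa [inv_zpow'] at hk

theorem zpow_apply_ne_apply (hP : Involutive P) (hS : Involutive S) (hPf : ∀ x, P x ≠ x)
    (hSf : ∀ x, S x ≠ x) (k : ℤ) (x : α) : ((P * S) ^ k) x ≠ P x := by
  intro h
  -- `P` acts on the `P * S`-cycle of `x` as `j ↦ k - j` and `S` as `j ↦ k - 1 - j`, and one of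
  -- these two reflections has a fixed point.
  have hPj : ∀ j : ℤ, P (((P * S) ^ j) x) = ((P * S) ^ (k - j)) x := fun j => by
    rw [involutive_mul_zpow_apply hP hS, ← h, ← Perm.mul_apply, ← zpow_add, neg_add_eq_sub]
  obtain ⟨a, rfl | rfl⟩ := Int.even_or_odd' k
  · exact hPf _ (by rw [hPj]; ring_nf)
  · refine hSf (((P * S) ^ a) x) ?_
    rw [← hP (S _), ← Perm.mul_apply P S, ← Perm.mul_apply (P * S), ← zpow_one_add, hPj]
    ring_nf

theorem exists_zpow_of_mem_orbit (hP : Involutive P) (hS : Involutive S) {x y : α}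
    (hy : y ∈ orbit (pairGroup P S) x) :
    ∃ k : ℤ, ((P * S) ^ k) x = y ∨ P (((P * S) ^ k) x) = y := by
  set D := {y | ∃ k : ℤ, ((P * S) ^ k) x = y ∨ P (((P * S) ^ k) x) = y}
  have hPD : ∀ z ∈ D, P z ∈ D := by
    rintro z ⟨k, rfl | rfl⟩
    · exact ⟨k, Or.inr rfl⟩
    · exact ⟨k, Or.inl (hP _).symm⟩
  have hSD : ∀ z ∈ D, S z ∈ D := by
    rintro z ⟨k, rfl | rfl⟩
    · refine ⟨1 + k, Or.inr ?_⟩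
      rw [zpow_one_add, Perm.mul_apply, Perm.mul_apply, hP]
    · refine ⟨-1 + k, Or.inl ?_⟩
      rw [zpow_add, zpow_neg_one, Perm.mul_apply, Perm.inv_eq_iff_eq, Perm.mul_apply, hS, hP]
  obtain ⟨⟨g, hg⟩, rfl⟩ := hy
  suffices ∀ z ∈ D, g z ∈ D from this x ⟨0, Or.inl rfl⟩
  induction hg using Subgroup.closure_induction'' with
  | mem g hg | inv_mem g hg =>
    rcases hg with rfl | rfl
    · simpa [Perm.inv_def, hP.symm_eq_self_of_involutive] using hPD
    · simpa [Perm.inv_def, hS.symm_eq_self_of_involutive] using hSD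
  | one => exact fun z hz => hz
  | mul g h _ _ hg hh => exact fun z hz => hg _ (hh z hz)

noncomputable def cycleEnum (σ : Perm α) (x : α) : ZMod (minimalPeriod (σ • ·) x) → α :=
  fun k => (orbitZPowersEquiv σ x).symm k

theorem cycleEnum_intCast (σ : Perm α) (x : α) (k : ℤ) : cycleEnum σ x k = (σ ^ k) x := by
  rw [cycleEnum, orbitZPowersEquiv_symm_apply']
  rfl

theorem cycleEnum_injective (σ : Perm α) (x : α) : Injective (cycleEnum σ x) :=
  Subtype.val_injective.comp (orbitZPowersEquiv σ x).symm.injective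

theorem cycleEnum_add_intCast (σ : Perm α) (x : α) (a : ZMod (minimalPeriod (σ • ·) x))
    (k : ℤ) :
    cycleEnum σ x (a + k) = (σ ^ k) (cycleEnum σ x a) := by
  obtain ⟨a, rfl⟩ := ZMod.intCast_surjective a
  rw [← Int.cast_add, cycleEnum_intCast, cycleEnum_intCast, add_comm, zpow_add, Perm.mul_apply]

variable (P S) in
noncomputable def loopEnum (x : α) :
    ZMod (minimalPeriod ((P * S) • ·) x) ⊕ ZMod (minimalPeriod ((P * S) • ·) x) → α :=
  Sum.elim (cycleEnum (P * S) x) (P ∘ cycleEnum (P * S) x)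

theorem loopEnum_injective (hP : Involutive P) (hS : Involutive S) (hPf : ∀ x, P x ≠ x)
    (hSf : ∀ x, S x ≠ x) (x : α) : Injective (loopEnum P S x) := by
  have hne : ∀ a b, cycleEnum (P * S) x a ≠ P (cycleEnum (P * S) x b) := by
    intro a b
    obtain ⟨a, rfl⟩ := ZMod.intCast_surjective a
    obtain ⟨b, rfl⟩ := ZMod.intCast_surjective b
    rw [cycleEnum_intCast, cycleEnum_intCast, involutive_mul_zpow_apply hP hS]
    intro h
    refine zpow_apply_ne_apply hP hS hPf hSf (b + a) x ?_
    rw [zpow_add, Perm.mul_apply, h, ← Perm.mul_apply, ← zpow_add, add_neg_cancel, zpow_zero,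
      Perm.one_apply]
  rintro (a | a) (b | b) h
  · exact congrArg _ (cycleEnum_injective _ _ h)
  · exact absurd h (hne a b)
  · exact absurd h.symm (hne b a)
  · exact congrArg _ (cycleEnum_injective _ _ (P.injective h))

theorem range_loopEnum (hP : Involutive P) (hS : Involutive S) (x : α) :
    Set.range (loopEnum P S x) = orbit (pairGroup P S) x := by
  have hc : P * S ∈ pairGroup P S := mul_mem (pairGroup.left P S).2 (pairGroup.right P S).2
  ext y
  constructor
  · rintro ⟨a | a, rfl⟩ <;> obtain ⟨a, rfl⟩ := ZMod.intCast_surjective a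
    · exact ⟨⟨_, zpow_mem hc a⟩, (cycleEnum_intCast _ _ a).symm⟩
    · exact ⟨⟨_, mul_mem (pairGroup.left P S).2 (zpow_mem hc a)⟩,
        (congrArg P (cycleEnum_intCast _ _ a)).symm⟩
  · intro hy
    obtain ⟨k, rfl | rfl⟩ := exists_zpow_of_mem_orbit hP hS hy
    · exact ⟨.inl k, cycleEnum_intCast _ _ k⟩
    · exact ⟨.inr k, congrArg P (cycleEnum_intCast _ _ k)⟩

theorem apply_loopEnum_inl (hP : Involutive P) (x : α) (k) :
    S (loopEnum P S x (.inl k)) = loopEnum P S x (.inr (k + 1)) := by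
  rw [loopEnum, Sum.elim_inl, Sum.elim_inr, comp_apply, ← Int.cast_one, cycleEnum_add_intCast,
    zpow_one, Perm.mul_apply, hP]

theorem apply_loopEnum_inr (hP : Involutive P) (hS : Involutive S) (x : α) (k) :
    S (loopEnum P S x (.inr k)) = loopEnum P S x (.inl (k - 1)) := by
  rw [loopEnum, Sum.elim_inl, Sum.elim_inr, comp_apply, sub_eq_add_neg, ← Int.cast_one,
    ← Int.cast_neg, cycleEnum_add_intCast, zpow_neg_one, Perm.eq_inv_iff_eq, Perm.mul_apply, hS,
    hP]

variable [Finite α]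

noncomputable def loopEquiv (hP : Involutive P) (hS : Involutive S) (hPf : ∀ x, P x ≠ x)
    (hSf : ∀ x, S x ≠ x) (q : orbitRel.Quotient (pairGroup P S) α) :
    ZMod (minimalPeriod ((P * S) • ·) q.out) ⊕ ZMod (minimalPeriod ((P * S) • ·) q.out) ≃
      q.orbit :=
  (Equiv.ofInjective _ (loopEnum_injective hP hS hPf hSf q.out)).trans <| Equiv.setCongr <|
    (range_loopEnum hP hS q.out).trans (q.orbit_eq_orbit_out Quotient.out_eq').symm

end Loops

section LoopSum

variable {O n R : Type*} [Fintype O] [DecidableEq n] [CommSemiring R]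

/-- `ε` is meant to pick one point of each `s`-pair, where the factor `A` of that pair is
recorded. -/
def edgeWeight (A : Matrix n n R) (p s : O → O) (ε : O → Prop) [DecidablePred ε] (j : O → n)
    (x : O) : R :=
  (if j (p x) = j x then 1 else 0) * if ε x then A (j x) (j (s x)) else 1

variable {m : ℕ} [NeZero m] {A : Matrix n n R} {p s : O → O} {ε : O → Prop}
  [DecidablePred ε]

theorem prod_edgeWeight_of_loopEquiv (hA : A.IsSymm) (hε : ∀ x, ε (s x) ↔ ¬ ε x)
    (e : ZMod m ⊕ ZMod m ≃ O)
    (hp₁ : ∀ k, p (e (.inl k)) = e (.inr k)) (hp₂ : ∀ k, p (e (.inr k)) = e (.inl k))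
    (hs₁ : ∀ k, s (e (.inl k)) = e (.inr (k + 1)))
    (hs₂ : ∀ k, s (e (.inr k)) = e (.inl (k - 1)))
    (u v : ZMod m → n) :
    ∏ x, edgeWeight A p s ε (Sum.elim u v ∘ e.symm) x =
      if v = u then ∏ k, A (u k) (u (k + 1)) else 0 := by
  rw [← e.prod_comp, Fintype.prod_sum_type]
  simp only [edgeWeight, comp_apply, hp₁, hp₂, hs₁, hs₂, symm_apply_apply, Sum.elim_inl,
    Sum.elim_inr]
  split_ifs with h
  · subst v
    simp only [if_true, one_mul]
    rw [← Equiv.prod_comp (Equiv.addRight (1 : ZMod m))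
      (fun k => if ε (e (.inr k)) then A (u k) (u (k - 1)) else 1), ← prod_mul_distrib]
    refine prod_congr rfl fun k _ => ?_
    simp only [coe_addRight, add_sub_cancel_right, ← hs₁, hε, hA.apply]
    split_ifs <;> simp
  · obtain ⟨k, hk⟩ := ne_iff.mp h
    exact mul_eq_zero_of_left (prod_eq_zero (mem_univ k) (by simp [hk])) _

theorem sum_prod_edgeWeight_of_loopEquiv [Fintype n] [DecidableEq O] (hA : A.IsSymm)
    (hε : ∀ x, ε (s x) ↔ ¬ ε x) (e : ZMod m ⊕ ZMod m ≃ O)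
    (hp₁ : ∀ k, p (e (.inl k)) = e (.inr k)) (hp₂ : ∀ k, p (e (.inr k)) = e (.inl k))
    (hs₁ : ∀ k, s (e (.inl k)) = e (.inr (k + 1)))
    (hs₂ : ∀ k, s (e (.inr k)) = e (.inl (k - 1))) :
    ∑ j : O → n, ∏ x, edgeWeight A p s ε j x = (A ^ m).trace := by
  let E := (sumArrowEquivProdArrow _ _ n).symm.trans (e.arrowCongr (Equiv.refl n))
  calc ∑ j : O → n, ∏ x, edgeWeight A p s ε j x
      = ∑ u, ∑ v, ∏ x, edgeWeight A p s ε (Sum.elim u v ∘ e.symm) x := by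
        rw [← Fintype.sum_prod_type']
        exact (Fintype.sum_equiv E _ _ fun _ => rfl).symm
    _ = ∑ u : ZMod m → n, ∏ k, A (u k) (u (k + 1)) := by
        simp [prod_edgeWeight_of_loopEquiv hA hε e hp₁ hp₂ hs₁ hs₂]
    _ = (A ^ m).trace := (A.trace_pow_eq_sum_prod_zmod m).symm

end LoopSum

section Orbits

variable {G α β R : Type*} [Group G] [MulAction G α] [Fintype α]
  [Fintype (orbitRel.Quotient G α)] [∀ q : orbitRel.Quotient G α, Fintype q.orbit]

theorem prod_eq_prod_orbits [CommMonoid R] (g : α → R) :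
    ∏ x, g x = ∏ q : orbitRel.Quotient G α, ∏ x : q.orbit, g x :=
  (Fintype.prod_equiv (selfEquivSigmaOrbits' G α) _ (fun y => g y.2) fun _ => rfl).trans
    (Fintype.prod_sigma _)

theorem sum_prod_eq_prod_sum_orbits [DecidableEq α] [Fintype β] [DecidableEq β] [CommSemiring R]
    (F : ∀ q : orbitRel.Quotient G α, (q.orbit → β) → R) :
    ∑ i : α → β, ∏ q, F q (fun x => i x) = ∏ q, ∑ j : q.orbit → β, F q j := by
  classical
  rw [Fintype.prod_sum]
  exact Fintype.sum_equiv (((selfEquivSigmaOrbits' G α).arrowCongr (Equiv.refl β)).trans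
    (Equiv.piCurry fun _ _ => β)) _ _ fun _ => rfl

end Orbits

section LoopDecomposition

variable {α n R : Type*} [Fintype α] [DecidableEq α] [Fintype n] [DecidableEq n] [CommSemiring R]
  {A : Matrix n n R} {P S : Perm α} {ε : α → Prop} [DecidablePred ε]

theorem sum_prod_edgeWeight_loop (hA : A.IsSymm) (hP : Involutive P) (hS : Involutive S)
    (hPf : ∀ x, P x ≠ x) (hSf : ∀ x, S x ≠ x) (hε : ∀ x, ε (S x) ↔ ¬ ε x)
    (q : orbitRel.Quotient (pairGroup P S) α) [Fintype q.orbit] :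
    ∑ j : q.orbit → n, ∏ x, edgeWeight A (fun x : q.orbit => pairGroup.left P S • x)
      (pairGroup.right P S • ·) (fun x : q.orbit => ε x) j x =
        (A ^ (Nat.card q.orbit / 2)).trace := by
  let e := loopEquiv hP hS hPf hSf q
  have hcard : Nat.card q.orbit / 2 = minimalPeriod ((P * S) • ·) q.out := by
    rw [← Nat.card_congr e, Nat.card_sum, Nat.card_zmod]
    omega
  rw [hcard]
  exact sum_prod_edgeWeight_of_loopEquiv hA (fun x => hε x) e (fun _ => rfl)
    (fun _ => Subtype.ext (hP _)) (fun k => Subtype.ext (apply_loopEnum_inl hP _ k))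
    (fun k => Subtype.ext (apply_loopEnum_inr hP hS _ k))

theorem sum_prod_edgeWeight_eq_prod_loops (hA : A.IsSymm) (hP : Involutive P) (hS : Involutive S)
    (hPf : ∀ x, P x ≠ x) (hSf : ∀ x, S x ≠ x) (hε : ∀ x, ε (S x) ↔ ¬ ε x) :
    ∑ i : α → n, ∏ x, edgeWeight A P S ε i x =
      ∏ q : orbitRel.Quotient (pairGroup P S) α, (A ^ (Nat.card q.orbit / 2)).trace := by
  classical
  let F (q : orbitRel.Quotient (pairGroup P S) α) (j : q.orbit → n) : R :=
    ∏ x, edgeWeight A (pairGroup.left P S • ·) (pairGroup.right P S • ·)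
      (fun x : q.orbit => ε x) j x
  calc ∑ i : α → n, ∏ x, edgeWeight A P S ε i x
        = ∑ i : α → n, ∏ q, F q (fun x => i x) :=
        sum_congr rfl fun i _ => prod_eq_prod_orbits _
    _ = ∏ q, ∑ j, F q j := sum_prod_eq_prod_sum_orbits F
    _ = _ := prod_congr rfl fun q _ => sum_prod_edgeWeight_loop hA hP hS hPf hSf hε q

end LoopDecomposition

section FirstPairPartition

variable {n : ℕ}

theorem firstPP_apply_val (x : Fin (2 * n)) :
    (firstPP n x : ℕ) = 2 * ((x : ℕ) / 2) + (1 - (x : ℕ) % 2) :=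
  rfl

theorem firstPP_involutive : Involutive (firstPP n) :=
  fun x => Fin.ext (by simp only [firstPP_apply_val]; omega)

theorem firstPP_apply_ne (x : Fin (2 * n)) : firstPP n x ≠ x := fun h => by
  have := congrArg Fin.val h
  rw [firstPP_apply_val] at this
  omega

theorem even_firstPP_iff (x : Fin (2 * n)) : Even (firstPP n x : ℕ) ↔ ¬ Even (x : ℕ) := by
  rw [firstPP_apply_val, Nat.even_iff, Nat.even_iff]
  omega

theorem firstPP_two_mul (k : Fin n) :
    firstPP n ⟨2 * k, by omega⟩ = ⟨2 * k + 1, by omega⟩ :=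
  Fin.ext (by simp only [firstPP_apply_val]; omega)

theorem prod_two_mul_eq_prod_even {M : Type*} [CommMonoid M] (g : Fin (2 * n) → M) :
    ∏ k : Fin n, g ⟨2 * k, by omega⟩ =
      ∏ x : Fin (2 * n), if Even (x : ℕ) then g x else 1 := by
  rw [← prod_filter]
  refine prod_nbij' (fun k => ⟨2 * k, by omega⟩) (fun x => ⟨x / 2, by omega⟩) ?_ ?_ ?_ ?_ ?_
  · simp
  · simp
  · exact fun k _ => Fin.ext (by simp)
  · intro x hx
    rw [mem_filter, Nat.even_iff] at hx
    exact Fin.ext (by simp only; omega)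
  · simp

theorem sum_pairing_eq_sum_prod_edgeWeight {d R : Type*} [Fintype d] [DecidableEq d]
    [CommSemiring R] (A : Matrix d d R) (P : Perm (Fin (2 * n))) :
    ∑ i ∈ univ.filter (fun i : Fin (2 * n) → d => ∀ x, i (P x) = i x),
        ∏ k : Fin n, A (i ⟨2 * k, by omega⟩) (i ⟨2 * k + 1, by omega⟩) =
      ∑ i, ∏ x, edgeWeight A P (firstPP n) (fun x => Even (x : ℕ)) i x := by
  rw [sum_filter]
  refine sum_congr rfl fun i _ => ?_
  simp only [edgeWeight, prod_mul_distrib, Fintype.prod_boole, ← prod_two_mul_eq_prod_even,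
    firstPP_two_mul]
  split_ifs <;> simp

end FirstPairPartition

open Matrix in
/-- For `A = X Xᵀ`, the sum over all functions `i : [2n] → [d]` with
`i ∘ P = i` of `∏ₖ A_{i(2k-1), i(2k)}` equals `∏_{O ∈ L(P,S)} Tr(A^{|O|/2})`
(0-indexed, the k-th factor is `A_{i(2k), i(2k+1)}` for `0 ≤ k < n`). -/
theorem statement5 {d n : ℕ}
    (X : Matrix (Fin d) (Fin d) ℝ) (P : Equiv.Perm (Fin (2*n))) (hP : IsPairPartition P) :
    ∑ i ∈ Finset.univ.filter (fun i : Fin (2*n) → Fin d => ∀ x, i (P x) = i x),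
        ∏ k : Fin n, (X * Xᵀ) (i ⟨2*(k:ℕ), by have := k.isLt; omega⟩)
          (i ⟨2*(k:ℕ)+1, by have := k.isLt; omega⟩) =
      ((loopType P (firstPP n)).map fun l => ((X * Xᵀ) ^ l).trace).prod := by
  rw [sum_pairing_eq_sum_prod_edgeWeight, sum_prod_edgeWeight_eq_prod_loops
    (isSymm_mul_transpose_self X) hP.1 firstPP_involutive hP.2 firstPP_apply_ne even_firstPP_iff,
    loopType, Multiset.map_map, prod_map_val]
  rfl

end ZonalPP
end

section
/- Let λ be a partition of n, identify the boxes of 2λ with {1,…,2n} via the canonical tableau T (numbering consecutively along rows), and let S be the first pair-partition of [2n]. If (S₁,S₂) is a T-admissible couple of pair-partitions of [2n] with |L(S₁,S₂)| = n (i.e. every orbit of the subgroup generated by S₁ and S₂ has cardinality 2), then S₁ = S₂ = S. -/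
open scoped BigOperators

/-! Every loop of `(S₁, S₂)` contains a pair `{x, S₁ x}`, so `n` loops on `2n` points force each
loop to be exactly such a pair; as `S₂ x` lies in the loop of `x` and `S₂ x ≠ x`, `S₂ = S₁`.
Hence `S₁` keeps rows and `S ∘ S₁` keeps columns. Since the rows of `2λ` have even length, `S`
pairs boxes within a row, so `S ∘ S₁` keeps both row and column of every box, i.e. `S ∘ S₁ = 1`. -/

open Equiv MulAction

theorem MulAction.card_orbit_eq_of_forall_le {G α : Type*} [Group G] [MulAction G α] [Finite α]
    {k : ℕ} (hk : ∀ x : α, k ≤ Nat.card (orbit G x))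
    (hcard : k * Nat.card (orbitRel.Quotient G α) = Nat.card α) (x : α) :
    Nat.card (orbit G x) = k := by
  have hk' : ∀ ω : orbitRel.Quotient G α, k ≤ Nat.card ω.orbit := fun ω => by
    induction ω using Quotient.inductionOn' with
    | h y => rw [orbitRel.Quotient.orbit_mk]; exact hk y
  have hsum : ∑ ω : orbitRel.Quotient G α, Nat.card ω.orbit =
      ∑ _ω : orbitRel.Quotient G α, k := by
    rw [← Nat.card_sigma, ← Nat.card_congr (selfEquivSigmaOrbits' G α), Finset.sum_const,
      Finset.card_univ, smul_eq_mul, ← Nat.card_eq_fintype_card, mul_comm, hcard]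
  have := ((Finset.sum_eq_sum_iff_of_le fun ω _ => hk' ω).1 hsum.symm
    (Quotient.mk'' x) (Finset.mem_univ _)).symm
  rwa [orbitRel.Quotient.orbit_mk] at this

section PermOrbit

variable {α : Type*} {G : Subgroup (Perm α)} {a b : Perm α} {x : α}

theorem pair_subset_orbit (ha : a ∈ G) : ({x, a x} : Set α) ⊆ orbit G x := by
  rintro y (rfl | rfl)
  exacts [mem_orbit_self y, ⟨⟨a, ha⟩, rfl⟩]

theorem two_le_card_orbit [Finite α] (ha : a ∈ G) (hx : a x ≠ x) : 2 ≤ Nat.card (orbit G x) := by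
  rw [Nat.card_coe_set_eq, ← Set.ncard_pair hx.symm]
  exact Set.ncard_le_ncard (pair_subset_orbit ha)

theorem apply_eq_of_card_orbit_eq_two [Finite α] (ha : a ∈ G) (hb : b ∈ G) (hax : a x ≠ x)
    (hbx : b x ≠ x) (h : Nat.card (orbit G x) = 2) : b x = a x := by
  have horbit : ({x, a x} : Set α) = orbit G x := by
    refine Set.eq_of_subset_of_ncard_le (pair_subset_orbit ha) ?_
    rw [← Nat.card_coe_set_eq, h, Set.ncard_pair hax.symm]
  have hmem : b x ∈ ({x, a x} : Set α) := horbit ▸ (⟨⟨b, hb⟩, rfl⟩ : b x ∈ orbit G x)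
  exact hmem.resolve_left hbx

end PermOrbit

theorem eq_and_eq_of_sum_range_add_eq {f : ℕ → ℕ} {r r' c c' : ℕ} (hc : c < f r) (hc' : c' < f r')
    (h : (∑ i ∈ Finset.range r, f i) + c = (∑ i ∈ Finset.range r', f i) + c') :
    r = r' ∧ c = c' := by
  wlog hle : r ≤ r' generalizing r r' c c'
  · obtain ⟨h₁, h₂⟩ := this hc' hc h.symm (by omega)
    exact ⟨h₁.symm, h₂.symm⟩
  obtain hlt | rfl := hle.lt_or_eq
  · have hmono := Finset.sum_le_sum_of_subset (f := f) (Finset.range_subset_range.2 hlt)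
    rw [Finset.sum_range_succ] at hmono
    omega
  · omega

namespace ZonalPP

theorem eq_of_two_mul_numLoops_eq {N : ℕ} {a b : Perm (Fin N)} (ha : ∀ x, a x ≠ x)
    (hb : ∀ x, b x ≠ x) (h : 2 * numLoops a b = N) : a = b := by
  have haG : a ∈ Subgroup.closure {a, b} := Subgroup.subset_closure (Set.mem_insert _ _)
  have hbG : b ∈ Subgroup.closure {a, b} := Subgroup.subset_closure (Set.mem_insert_of_mem _ rfl)
  have hcard := MulAction.card_orbit_eq_of_forall_le (fun x => two_le_card_orbit haG (ha x))
    (by rwa [Nat.card_fin])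
  exact Equiv.ext fun x =>
    (apply_eq_of_card_orbit_eq_two haG hbG (ha x) (hb x) (hcard x)).symm

/-- The canonical tableau `T` of `2λ`: the box numbered `t` lies in row `row t`, column `col t`. -/
def IsCanonicalNumbering {n : ℕ} (lam : n.Partition) (row col : Fin (2 * n) → ℕ) : Prop :=
  ∀ t, col t < 2 * rowLen lam (row t) ∧
    (∑ r ∈ Finset.range (row t), 2 * rowLen lam r) + col t = (t : ℕ)

namespace IsCanonicalNumbering

variable {n : ℕ} {lam : n.Partition} {row col : Fin (2 * n) → ℕ}

theorem eq_of_row_eq_of_col_eq (hT : IsCanonicalNumbering lam row col) {s t : Fin (2 * n)}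
    (hr : row s = row t) (hc : col s = col t) : s = t := by
  have hs := (hT s).2
  have ht := (hT t).2
  rw [hr, hc] at hs
  exact Fin.ext (hs.symm.trans ht)

theorem row_firstPP (hT : IsCanonicalNumbering lam row col) (t : Fin (2 * n)) :
    row (firstPP n t) = row t := by
  obtain ⟨hc, ht⟩ := hT t
  obtain ⟨hc', ht'⟩ := hT (firstPP n t)
  have hval : ((firstPP n t : Fin (2 * n)) : ℕ) = 2 * ((t : ℕ) / 2) + (1 - (t : ℕ) % 2) := rfl
  have hoffset : (∑ r ∈ Finset.range (row t), 2 * rowLen lam r) % 2 = 0 := by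
    rw [← Finset.mul_sum]; omega
  have hflip : 2 * (col t / 2) + (1 - col t % 2) < 2 * rowLen lam (row t) := by omega
  exact (eq_and_eq_of_sum_range_add_eq (f := fun r => 2 * rowLen lam r) hc' hflip
    (by omega)).1

end IsCanonicalNumbering

theorem firstPP_firstPP (n : ℕ) (t : Fin (2 * n)) : firstPP n (firstPP n t) = t :=
  (firstPP n).left_inv t

/-- If `(S₁,S₂)` is a `T`-admissible couple of pair-partitions of `[2n]`
(w.r.t. the canonical numbering of the boxes of `2λ`, given by the coordinate functions
`row, col`) with `n` loops, then `S₁ = S₂ = S`, the first pair-partition. -/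
theorem statement6 {n : ℕ} (lam : Nat.Partition n) (row col : Fin (2*n) → ℕ)
    (hT : ∀ t, col t < 2 * rowLen lam (row t) ∧
      (∑ r ∈ Finset.range (row t), 2 * rowLen lam r) + col t = (t : ℕ))
    (S1 S2 : Equiv.Perm (Fin (2*n)))
    (h1 : IsPairPartition S1) (h2 : IsPairPartition S2)
    (hcol : ∀ t, col ((firstPP n * S1) t) = col t)
    (hrow : ∀ t, row (S2 t) = row t)
    (hloops : numLoops S1 S2 = n) :
    S1 = firstPP n ∧ S2 = firstPP n := by
  replace hT : IsCanonicalNumbering lam row col := hT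
  have hS12 : S1 = S2 := eq_of_two_mul_numLoops_eq h1.2 h2.2 (by rw [hloops])
  have hS1 : S1 = firstPP n := by
    refine Equiv.ext fun t => ?_
    have hrow1 : row (S1 t) = row t := by rw [hS12]; exact hrow t
    have hfix : firstPP n (S1 t) = t :=
      hT.eq_of_row_eq_of_col_eq ((hT.row_firstPP _).trans hrow1) (hcol t)
    calc S1 t = firstPP n (firstPP n (S1 t)) := (firstPP_firstPP n _).symm
      _ = firstPP n t := by rw [hfix]
  exact ⟨hS1, hS12 ▸ hS1⟩

end ZonalPP
end

section
/- Let S₀, S₁, S₂ be pair-partitions of [2k] and λ a partition. Then N^{(2)}_{S₀,S₁,S₂}(λ) = 2^{|L(S₀,S₁)|} · N^{(1)}_{S₀,S₁,S₂}(λ), where |L(S₀,S₁)| is the number of loops of the couple (S₀,S₁). -/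
open scoped BigOperators

/-!
Writing a column `c` of `2λ` as the pair `(c / 2, c mod 2)` splits a function counted by `N²`
into a function counted by `N¹` and a parity `ε : [2k] → ZMod 2` that changes under both `S₀`
and `S₁`. Any two such parities differ by a function invariant under `S₀` and `S₁`, i.e. by an
arbitrary function on the loops, so there are `2 ^ |L(S₀,S₁)|` of them once one exists. One
exists because `S₀` conjugates `c = S₀S₁` to `c⁻¹` and therefore swaps the `c`-orbits in pairs
(no orbit is fixed, as `S₀` and `S₁` have no fixed points); colouring one orbit of each pair by `0`
and the other by `1` gives the parity.
-/

namespace ZonalPP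

open Equiv MulAction

section Flips

variable {α : Type*}

def Flips (s : α → α) (ε : α → ZMod 2) : Prop :=
  ∀ x, ε (s x) = ε x + 1

theorem flips_iff_of_flips {s : α → α} {δ : α → ZMod 2} (hδ : Flips s δ)
    (ε : α → ZMod 2) : Flips s ε ↔ ∀ x, (ε - δ) (s x) = (ε - δ) x := by
  refine forall_congr' fun x => ?_
  rw [Pi.sub_apply, Pi.sub_apply, hδ x]
  constructor <;> intro h <;> linear_combination h

theorem exists_flips_of_involutive {s : α → α} (hs : Function.Involutive s)
    (hfix : ∀ x, s x ≠ x) : ∃ χ : α → ZMod 2, Flips s χ := by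
  classical
  let : LinearOrder α := linearOrderOfSTO WellOrderingRel
  refine ⟨fun x => if x < s x then 0 else 1, fun x => ?_⟩
  rcases (hfix x).lt_or_gt with h | h
  · simp only [h.not_gt, hs x, h, if_true, if_false]
    decide
  · simp [h, h.not_gt, hs x]

theorem semiconjBy_mul_inv_of_mul_self {G : Type*} [Group G] {a b : G} (ha : a * a = 1)
    (hb : b * b = 1) : SemiconjBy a (a * b) (a * b)⁻¹ := by
  rw [SemiconjBy, mul_inv_rev, inv_eq_of_mul_eq_one_right ha, inv_eq_of_mul_eq_one_right hb,
    ← mul_assoc, ha, one_mul, mul_assoc, ha, mul_one]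

variable {a b : Perm α}

theorem apply_zpow_mul_apply (ha : Function.Involutive a) (hb : Function.Involutive b) (i : ℤ)
    (x : α) : a (((a * b) ^ i) x) = ((a * b) ^ (-i)) (a x) := by
  have h := ((semiconjBy_mul_inv_of_mul_self (Perm.ext ha) (Perm.ext hb)).zpow_right i).eq
  rw [inv_zpow'] at h
  exact congrArg (· x) h

theorem zpow_mul_apply_ne (ha : Function.Involutive a) (hb : Function.Involutive b)
    (ha' : ∀ x, a x ≠ x) (hb' : ∀ x, b x ≠ x) (j : ℤ) (x : α) : ((a * b) ^ j) x ≠ a x := by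
  have hconj := apply_zpow_mul_apply ha hb
  set c := a * b
  have hcomp : ∀ (i i' : ℤ) y, (c ^ i) ((c ^ i') y) = (c ^ (i + i')) y := fun i i' y => by
    rw [zpow_add, Perm.mul_apply]
  intro hj
  rcases Int.even_or_odd' j with ⟨i, rfl | rfl⟩
  · apply ha' ((c ^ i) x)
    rw [hconj, ← hj, hcomp, show -i + 2 * i = i by ring]
  · apply hb' ((c ^ i) x)
    have hb_eq : ∀ y, b y = a (c y) := fun y => (ha (b y)).symm
    rw [hb_eq, ← Perm.mul_apply c, ← zpow_one_add, hconj, ← hj, hcomp,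
      show -(1 + i) + (2 * i + 1) = i by ring]

theorem exists_flips_and_flips (ha : Function.Involutive a) (hb : Function.Involutive b)
    (ha' : ∀ x, a x ≠ x) (hb' : ∀ x, b x ≠ x) :
    ∃ δ : α → ZMod 2, Flips a δ ∧ Flips b δ := by
  set c := a * b
  let mk : α → orbitRel.Quotient (Subgroup.zpowers c) α := Quotient.mk''
  have mk_eq_iff : ∀ x y, mk x = mk y ↔ ∃ j : ℤ, (c ^ j) y = x := fun x y => by
    simp only [mk, Quotient.eq'', orbitRel_apply, mem_orbit_iff, Subgroup.exists_zpowers]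
    rfl
  let ι := Quotient.map' a fun x y hxy => by
    obtain ⟨j, rfl⟩ := (mk_eq_iff x y).1 (Quotient.sound' hxy)
    exact Quotient.exact' ((mk_eq_iff _ _).2 ⟨-j, (apply_zpow_mul_apply ha hb j y).symm⟩)
  have hι : ∀ x, ι (mk x) = mk (a x) := fun _ => rfl
  have ι_involutive : Function.Involutive ι := fun q =>
    Quotient.inductionOn' q fun x => by rw [hι, hι, ha x]
  have ι_ne : ∀ q, ι q ≠ q := fun q =>
    Quotient.inductionOn' q fun x h => by
      obtain ⟨j, hj⟩ := (mk_eq_iff _ _).1 ((hι x).symm.trans h)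
      exact zpow_mul_apply_ne ha hb ha' hb' j x hj
  obtain ⟨χ, hχ⟩ := exists_flips_of_involutive ι_involutive ι_ne
  have mk_b : ∀ x, mk (b x) = mk (a x) := fun x =>
    ((mk_eq_iff _ _).2 ⟨1, by rw [zpow_one, Perm.mul_apply, hb x]⟩).symm
  exact ⟨χ ∘ mk, fun x => hχ (mk x), fun x => by rw [Function.comp_apply, mk_b, ← hι, hχ]; rfl⟩

end Flips

section Invariant

variable {G α β : Type*} [Group G] [MulAction G α]

theorem apply_smul_eq_of_mem_closure {s : Set G} {φ : α → β}
    (hφ : ∀ g ∈ s, ∀ x, φ (g • x) = φ x) {g : G} (hg : g ∈ Subgroup.closure s) (x : α) :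
    φ (g • x) = φ x := by
  induction hg using Subgroup.closure_induction generalizing x with
  | mem g hg => exact hφ g hg x
  | one => rw [one_smul]
  | mul g h _ _ ihg ihh => rw [mul_smul, ihg, ihh]
  | inv g _ ih => rw [← ih, smul_inv_smul]

def invariantFunEquiv (s : Set G) :
    {φ : α → β // ∀ g ∈ s, ∀ x, φ (g • x) = φ x} ≃
      (orbitRel.Quotient (Subgroup.closure s) α → β) where
  toFun φ := Quotient.lift φ.1 fun x y hxy => by
    obtain ⟨⟨g, hg⟩, rfl⟩ := hxy
    exact apply_smul_eq_of_mem_closure φ.2 hg y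
  invFun ψ := ⟨fun x => ψ ⟦x⟧, fun g hg x =>
    congrArg ψ (Quotient.sound ⟨⟨g, Subgroup.subset_closure hg⟩, rfl⟩)⟩
  left_inv _ := rfl
  right_inv ψ := funext fun q => Quotient.inductionOn q fun _ => rfl

end Invariant

theorem card_flips {N : ℕ} {a b : Perm (Fin N)} (ha : IsPairPartition a)
    (hb : IsPairPartition b) :
    Nat.card {ε : Fin N → ZMod 2 // Flips a ε ∧ Flips b ε} = 2 ^ numLoops a b := by
  obtain ⟨δ, hδa, hδb⟩ := exists_flips_and_flips ha.1 hb.1 ha.2 hb.2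
  have e : {ε : Fin N → ZMod 2 // Flips a ε ∧ Flips b ε} ≃
      {φ : Fin N → ZMod 2 // ∀ g ∈ ({a, b} : Set (Perm (Fin N))), ∀ x, φ (g • x) = φ x} :=
    (Equiv.subRight δ).subtypeEquiv fun ε => by
      simp only [Set.forall_mem_insert, Set.mem_singleton_iff, forall_eq, Perm.smul_def,
        flips_iff_of_flips hδa, flips_iff_of_flips hδb]
      rfl
  rw [Nat.card_congr (e.trans (invariantFunEquiv _)), Nat.card_fun, Nat.card_zmod, numLoops]

section Columns

def splitCols {ι : Type*} : (ι → ℕ × ℕ) ≃ (ι → ℕ × ℕ) × (ι → ZMod 2) where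
  toFun f := (fun l => ((f l).1, (f l).2 / 2), fun l => ((f l).2 : ZMod 2))
  invFun p l := ((p.1 l).1, 2 * (p.1 l).2 + (p.2 l).val)
  left_inv f := funext fun l => Prod.ext rfl (by simp only [ZMod.val_natCast]; omega)
  right_inv p := by
    refine Prod.ext (funext fun l => Prod.ext rfl ?_) (funext fun l => ?_)
    · have := (p.2 l).val_lt
      dsimp only
      omega
    · simp [CharTwo.two_eq_zero]

theorem div_two_eq_and_ne_iff {a b : ℕ} :
    a / 2 = b / 2 ∧ a ≠ b ↔ a / 2 = b / 2 ∧ (a : ZMod 2) = b + 1 := by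
  rw [← Nat.cast_succ, ZMod.natCast_eq_natCast_iff']
  omega

theorem eq_iff_div_two_eq_and_cast_eq {a b : ℕ} :
    a = b ↔ a / 2 = b / 2 ∧ (a : ZMod 2) = b := by
  rw [ZMod.natCast_eq_natCast_iff']
  omega

variable {M n : ℕ} (f : Fin M → ℕ × ℕ)

theorem inBoxes2_iff (lam : n.Partition) :
    InBoxes2 lam f ↔ ∀ l, ((splitCols f).1 l).2 < rowLen lam ((splitCols f).1 l).1 := by
  simp only [InBoxes2, splitCols, Equiv.coe_fn_mk]
  exact forall_congr' fun _ => by omega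

theorem p0cond_iff (S0 : Perm (Fin M)) :
    P0cond S0 f ↔
      (∀ l, (splitCols f).1 (S0 l) = (splitCols f).1 l) ∧ Flips S0 (splitCols f).2 := by
  simp only [P0cond, Flips, splitCols, Equiv.coe_fn_mk, Prod.mk.injEq, ← forall_and, and_assoc,
    div_two_eq_and_ne_iff]

theorem p1cond_iff {S0 S1 : Perm (Fin M)} (hg : ∀ l, (splitCols f).1 (S0 l) = (splitCols f).1 l)
    (hε : Flips S0 (splitCols f).2) :
    P1cond S0 S1 f ↔
      (∀ l, ((splitCols f).1 (S1 l)).2 = ((splitCols f).1 l).2) ∧ Flips S1 (splitCols f).2 := by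
  simp only [P1cond, Flips, ← forall_and]
  refine forall_congr' fun l => ?_
  rw [eq_iff_div_two_eq_and_cast_eq, ← CharTwo.add_eq_iff_eq_add]
  have hcol := congrArg Prod.snd (hg (S1 l))
  have hpar := hε (S1 l)
  simp only [splitCols, Equiv.coe_fn_mk] at hcol hpar ⊢
  rw [hcol, hpar]

end Columns

theorem N2_eq_card_flips_mul_N1 {k n : ℕ} (S0 S1 S2 : Perm (Fin (2 * k))) (lam : n.Partition) :
    N2 S0 S1 S2 lam = Nat.card {ε : Fin (2 * k) → ZMod 2 // Flips S0 ε ∧ Flips S1 ε} *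
      N1 S0 S1 S2 lam := by
  rw [N2, N1, ← Nat.card_prod]
  refine Nat.card_congr (((splitCols.subtypeEquiv fun f => ?_).trans
    Equiv.subtypeProdEquivProd).trans (Equiv.prodComm _ _))
  rw [inBoxes2_iff, p0cond_iff]
  constructor
  · rintro ⟨hbox, ⟨hg, hε⟩, h1, h2⟩
    obtain ⟨hg1, hε1⟩ := (p1cond_iff f hg hε).1 h1
    exact ⟨⟨hbox, hg, hg1, h2⟩, hε, hε1⟩
  · rintro ⟨⟨hbox, hg, hg1, h2⟩, hε, hε1⟩
    exact ⟨hbox, ⟨hg, hε⟩, (p1cond_iff f hg hε).2 ⟨hg1, hε1⟩, h2⟩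

theorem statement8_general {k n : ℕ} (S0 S1 S2 : Equiv.Perm (Fin (2*k)))
    (h0 : IsPairPartition S0) (h1 : IsPairPartition S1)
    (lam : Nat.Partition n) :
    N2 S0 S1 S2 lam = 2 ^ numLoops S0 S1 * N1 S0 S1 S2 lam := by
  rw [N2_eq_card_flips_mul_N1, card_flips h0 h1]

/-- `N²_{S₀,S₁,S₂}(λ) = 2^{|L(S₀,S₁)|} · N¹_{S₀,S₁,S₂}(λ)`. -/
theorem statement8 {k n : ℕ} (S0 S1 S2 : Equiv.Perm (Fin (2*k)))
    (h0 : IsPairPartition S0) (h1 : IsPairPartition S1) (h2 : IsPairPartition S2)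
    (lam : Nat.Partition n) :
    N2 S0 S1 S2 lam = 2 ^ numLoops S0 S1 * N1 S0 S1 S2 lam :=
  statement8_general S0 S1 S2 h0 h1 lam

end ZonalPP
end

section
/- Let k ≤ n, let (S₁,S₂) be a couple of pair-partitions of [2k], and define pair-partitions S̃₁, S̃₂ of [2n] by adjoining to S₁ and S₂ the pairs {2k+1,2k+2}, {2k+3,2k+4}, …, {2n−1,2n}. Let λ be a partition of n and let S̃₀ be any pair-partition of [2n]. If the number N̂^{(2)}_{S̃₀,S̃₁,S̃₂}(λ) of injective functions f from {1,…,2n} to the boxes of 2λ satisfying (P0),(P1),(P2) with respect to (S̃₀,S̃₁,S̃₂) is nonzero, then S̃₀ restricted to {2k+1,…,2n} equals {{2k+1,2k+2},…,{2n−1,2n}}, i.e. S̃₀(2l+2) = 2l+1 for all k ≤ l < n. -/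
/-!
Fix `y ≥ 2k` and let `l` be its partner in the standard pairing, so that `S̃₁ l = S̃₂ l = y`.
For an admissible `f`, (P1) at `l` puts `f (S̃₀ y)` in the column of `f l`, while (P0) at `y`
and (P2) at `l` put it in the row of `f y`, which is the row of `f l`. Hence `f (S̃₀ y) = f l`,
and injectivity of `f` gives `S̃₀ y = l`.
-/

open scoped BigOperators

namespace ZonalPP

theorem exists_of_Nhat2_ne_zero {k n : ℕ} {S0 S1 S2 : Equiv.Perm (Fin (2*k))}
    {lam : n.Partition} (h : Nhat2 S0 S1 S2 lam ≠ 0) :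
    ∃ f : Fin (2*k) → ℕ × ℕ, Function.Injective f ∧ InBoxes2 lam f ∧ P0cond S0 f ∧
      P1cond S0 S1 f ∧ P2cond S2 f := by
  obtain ⟨⟨f, hf⟩⟩ := (Nat.card_ne_zero.mp h).1
  exact ⟨f, hf⟩

theorem ExtendsPP.apply_firstPP {k n : ℕ} {S : Equiv.Perm (Fin (2*k))}
    {T : Equiv.Perm (Fin (2*n))} (hT : ExtendsPP S T) {y : Fin (2*n)} (hy : 2*k ≤ (y : ℕ)) :
    T (firstPP n y) = y := by
  ext
  rw [hT.2 _ (by simp only [firstPP, Equiv.coe_fn_mk]; omega)]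
  simp only [firstPP, Equiv.coe_fn_mk]
  omega

theorem eq_of_injective_of_P0cond_of_P1cond_of_P2cond {M : ℕ}
    {S0 S1 S2 : Equiv.Perm (Fin M)} {f : Fin M → ℕ × ℕ} (hf : Function.Injective f)
    (hP0 : P0cond S0 f) (hP1 : P1cond S0 S1 f) (hP2 : P2cond S2 f) {l y : Fin M}
    (h1 : S1 l = y) (h2 : S2 l = y) : S0 y = l := by
  refine hf (Prod.ext ?_ ?_)
  · rw [(hP0 y).1, ← hP2 l, h2]
  · rw [← hP1 l, h1]

theorem statement9_general {k n : ℕ}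
    (S1 S2 : Equiv.Perm (Fin (2*k)))
    (T0 T1 T2 : Equiv.Perm (Fin (2*n)))
    (hT1 : ExtendsPP S1 T1) (hT2 : ExtendsPP S2 T2)
    (lam : Nat.Partition n)
    (hne : Nhat2 T0 T1 T2 lam ≠ 0) :
    ∀ y : Fin (2*n), 2*k ≤ (y : ℕ) →
      (T0 y : ℕ) = 2 * ((y : ℕ)/2) + (1 - (y : ℕ) % 2) := by
  intro y hy
  obtain ⟨f, hinj, -, hP0, hP1, hP2⟩ := exists_of_Nhat2_ne_zero hne
  have hT0y : T0 y = firstPP n y :=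
    eq_of_injective_of_P0cond_of_P1cond_of_P2cond hinj hP0 hP1 hP2
      (hT1.apply_firstPP hy) (hT2.apply_firstPP hy)
  exact congrArg Fin.val hT0y

/-- If `S̃₁, S̃₂` are the extensions of `S₁, S₂` to `[2n]` by the pairs
`{2k+1,2k+2}, …, {2n-1,2n}`, `S̃₀` is any pair-partition of `[2n]` and the number of
injective functions satisfying (P0),(P1),(P2) w.r.t. `(S̃₀,S̃₁,S̃₂)` is nonzero, then `S̃₀`
restricted to `{2k+1,…,2n}` consists exactly of these pairs. -/
theorem statement9 {k n : ℕ} (hkn : k ≤ n)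
    (S1 S2 : Equiv.Perm (Fin (2*k))) (h1 : IsPairPartition S1) (h2 : IsPairPartition S2)
    (T0 T1 T2 : Equiv.Perm (Fin (2*n))) (hT0 : IsPairPartition T0)
    (hT1 : ExtendsPP S1 T1) (hT2 : ExtendsPP S2 T2)
    (lam : Nat.Partition n)
    (hne : Nhat2 T0 T1 T2 lam ≠ 0) :
    ∀ y : Fin (2*n), 2*k ≤ (y : ℕ) →
      (T0 y : ℕ) = 2 * ((y : ℕ)/2) + (1 - (y : ℕ) % 2) :=
  statement9_general S1 S2 T0 T1 T2 hT1 hT2 lam hne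

end ZonalPP
end

section
/- Let S₀, S₁ be pair-partitions of [2k], let λ be a partition, and let f be a function from {1,…,2k} to the boxes of 2λ satisfying conditions (P0) and (P1) with respect to (S₀,S₁). If f(i) = f(j) and j lies in the same orbit as i under the subgroup generated by S₀ and S₁, then j = (S₀∘S₁)^m(i) for some integer m; that is, i and j are at even distance in their common loop of L(S₀,S₁). -/
open scoped BigOperators

/-! The group generated by two involutions `S₀, S₁` is dihedral: each of its elements is
`(S₀S₁)^m` or `(S₀S₁)^m S₀`. By (P1) the column of `f` is invariant under `S₀S₁`, while by (P0)
`S₀` changes it; so an element of the second kind never maps `i` to a point with the same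
image under `f`. -/

section Dihedral

variable {G : Type*} [Group G] {a b : G}

theorem mul_zpow_mul_eq_zpow_neg_mul (ha : a * a = 1) (hb : b * b = 1) (m : ℤ) :
    a * (a * b) ^ m = (a * b) ^ (-m) * a := by
  have ha' : a⁻¹ = a := inv_eq_of_mul_eq_one_right ha
  have hb' : b⁻¹ = b := inv_eq_of_mul_eq_one_right hb
  have hconj : a * (a * b) * a⁻¹ = (a * b)⁻¹ := by
    rw [ha', mul_inv_rev, ha', hb', ← mul_assoc, ha, one_mul]
  calc a * (a * b) ^ m = a * (a * b) ^ m * a⁻¹ * a := by group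
    _ = (a * b) ^ (-m) * a := by rw [← conj_zpow, hconj, inv_zpow, zpow_neg]

theorem exists_zpow_or_zpow_mul_of_mem_closure_pair (ha : a * a = 1) (hb : b * b = 1) {g : G}
    (hg : g ∈ Subgroup.closure {a, b}) : ∃ m : ℤ, g = (a * b) ^ m ∨ g = (a * b) ^ m * a := by
  have ha' : a⁻¹ = a := inv_eq_of_mul_eq_one_right ha
  have hb' : b⁻¹ = b := inv_eq_of_mul_eq_one_right hb
  have hswap := mul_zpow_mul_eq_zpow_neg_mul ha hb
  induction hg using Subgroup.closure_induction with
  | mem x hx =>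
    rcases hx with rfl | rfl
    · exact ⟨0, Or.inr (by simp)⟩
    · refine ⟨-1, Or.inr ?_⟩
      rw [zpow_neg_one, mul_inv_rev, ha', hb', mul_assoc, ha, mul_one]
  | one => exact ⟨0, Or.inl (zpow_zero _).symm⟩
  | mul x y _ _ hx hy =>
    obtain ⟨m, rfl | rfl⟩ := hx <;> obtain ⟨n, rfl | rfl⟩ := hy
    · exact ⟨m + n, Or.inl (zpow_add _ m n).symm⟩
    · exact ⟨m + n, Or.inr (by rw [← mul_assoc, ← zpow_add])⟩
    · refine ⟨m - n, Or.inr ?_⟩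
      rw [mul_assoc, hswap, ← mul_assoc, ← zpow_add, ← sub_eq_add_neg]
    · refine ⟨m - n, Or.inl ?_⟩
      rw [mul_assoc, ← mul_assoc a, hswap, mul_assoc, ha, mul_one, ← zpow_add,
        ← sub_eq_add_neg]
  | inv x _ hx =>
    obtain ⟨m, rfl | rfl⟩ := hx
    · exact ⟨-m, Or.inl (zpow_neg _ m).symm⟩
    · exact ⟨m, Or.inr (by rw [mul_inv_rev, ha', ← zpow_neg, hswap, neg_neg])⟩

end Dihedral

namespace Equiv.Perm

variable {α β : Type*}

theorem mul_self_eq_one_of_involutive {σ : Perm α} (h : Function.Involutive σ) :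
    σ * σ = 1 :=
  Equiv.ext h

theorem apply_zpow_apply_eq {φ : α → β} {σ : Perm α} (h : ∀ x, φ (σ x) = φ x) (m : ℤ)
    (x : α) : φ ((σ ^ m) x) = φ x := by
  refine zpow_induction_left (P := fun τ : Perm α => ∀ x, φ (τ x) = φ x)
    (fun _ => rfl) (fun τ ih x => ?_) (fun τ ih x => ?_) m x
  · rw [mul_apply, h, ih]
  · rw [mul_apply, ← h (σ⁻¹ _), coe_inv, Equiv.apply_symm_apply, ih]

theorem SameCycle.apply_eq_of_forall_apply_eq {φ : α → β} {σ : Perm α} {x y : α}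
    (hxy : σ.SameCycle x y) (h : ∀ x, φ (σ x) = φ x) : φ x = φ y := by
  obtain ⟨m, rfl⟩ := hxy
  exact (apply_zpow_apply_eq h m x).symm

theorem sameCycle_or_sameCycle_apply_of_mem_orbit_closure_pair {a b : Perm α}
    (ha : Function.Involutive a) (hb : Function.Involutive b) {x y : α}
    (hy : y ∈ MulAction.orbit (Subgroup.closure ({a, b} : Set (Perm α))) x) :
    (a * b).SameCycle x y ∨ (a * b).SameCycle (a x) y := by
  obtain ⟨⟨g, hg⟩, rfl⟩ := hy
  obtain ⟨m, rfl | rfl⟩ := exists_zpow_or_zpow_mul_of_mem_closure_pair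
    (mul_self_eq_one_of_involutive ha) (mul_self_eq_one_of_involutive hb) hg
  · exact Or.inl ⟨m, rfl⟩
  · exact Or.inr ⟨m, rfl⟩

end Equiv.Perm

namespace ZonalPP

theorem statement11_general {k : ℕ} (S0 S1 : Equiv.Perm (Fin (2*k)))
    (h0 : IsPairPartition S0) (h1 : IsPairPartition S1)
    (f : Fin (2*k) → ℕ × ℕ)
    (hP0 : P0cond S0 f) (hP1 : P1cond S0 S1 f)
    (i j : Fin (2*k)) (hf : f i = f j)
    (horb : j ∈ MulAction.orbit
      (Subgroup.closure ({S0, S1} : Set (Equiv.Perm (Fin (2*k))))) i) :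
    ∃ m : ℤ, ((S0 * S1) ^ m) i = j := by
  have hcol : ∀ x, (f ((S0 * S1) x)).2 = (f x).2 := hP1
  rcases Equiv.Perm.sameCycle_or_sameCycle_apply_of_mem_orbit_closure_pair h0.1 h1.1 horb with
    hij | hij
  · exact hij
  · refine absurd ?_ (hP0 i).2.2
    rw [hij.apply_eq_of_forall_apply_eq (φ := fun x => (f x).2) hcol, hf]

/-- If `f` (into the boxes of `2λ`) satisfies (P0) and (P1) w.r.t.
`(S₀,S₁)`, `f i = f j`, and `j` is in the orbit of `i` under the subgroup generated by
`S₀, S₁`, then `j = (S₀∘S₁)^m (i)` for some integer `m` (even distance in the loop). -/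
theorem statement11 {k n : ℕ} (S0 S1 : Equiv.Perm (Fin (2*k)))
    (h0 : IsPairPartition S0) (h1 : IsPairPartition S1)
    (lam : Nat.Partition n) (f : Fin (2*k) → ℕ × ℕ)
    (hbox : InBoxes2 lam f) (hP0 : P0cond S0 f) (hP1 : P1cond S0 S1 f)
    (i j : Fin (2*k)) (hf : f i = f j)
    (horb : j ∈ MulAction.orbit
      (Subgroup.closure ({S0, S1} : Set (Equiv.Perm (Fin (2*k))))) i) :
    ∃ m : ℤ, ((S0 * S1) ^ m) i = j :=
  statement11_general S0 S1 h0 h1 f hP0 hP1 i j hf horb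

end ZonalPP
end

section
/- Let S₀, S₁, S₂ be pair-partitions of [2k], let λ be a partition, and let f be a function from {1,…,2k} to the boxes of 2λ with f(i) = f(j) for some i ≠ j. Set S₀′ = (i j)∘S₀∘(i j), where (i j) is the transposition exchanging i and j. Then f satisfies conditions (P0), (P1) and (P2) with respect to (S₀,S₁,S₂) if and only if f satisfies them with respect to (S₀′,S₁,S₂). -/
open scoped BigOperators

/-!
Since `f i = f j`, precomposing `f` with `(i j)` does not change it, and (P0) forces
`f (S₀ i) = f (S₀ j)`, the unique neighbor of the common box; hence `f ∘ S₀' = f ∘ S₀`.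
The three conditions see `S₀` only through `f ∘ S₀`, and since `S₀ = (i j) S₀' (i j)` the
same argument applies in the other direction.
-/

namespace ZonalPP

variable {α β : Type*} [DecidableEq α]

theorem apply_swap_eq_of_apply_eq {g : α → β} {i j : α} (hg : g i = g j) (x : α) :
    g (Equiv.swap i j x) = g x := by
  rcases eq_or_ne x i with rfl | hxi
  · rw [Equiv.swap_apply_left, hg]
  rcases eq_or_ne x j with rfl | hxj
  · rw [Equiv.swap_apply_right, hg]
  · rw [Equiv.swap_apply_of_ne_of_ne hxi hxj]

variable {M : ℕ} {S T S1 S2 : Equiv.Perm (Fin M)} {f : Fin M → ℕ × ℕ}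

/-- A box of `2λ` has only one neighbor. -/
theorem P0cond.apply_eq_apply_of_eq (hS : P0cond S f) {i j : Fin M} (hf : f i = f j) :
    f (S i) = f (S j) := by
  obtain ⟨hrow_i, hcol_i, hne_i⟩ := hS i
  obtain ⟨hrow_j, hcol_j, hne_j⟩ := hS j
  rw [hf] at hrow_i hcol_i hne_i
  exact Prod.ext (hrow_i.trans hrow_j.symm) (by omega)

theorem P0cond.apply_conj_swap (hS : P0cond S f) {i j : Fin M} (hf : f i = f j) (x : Fin M) :
    f ((Equiv.swap i j * S * Equiv.swap i j) x) = f (S x) := by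
  simp only [Equiv.Perm.mul_apply]
  rw [apply_swap_eq_of_apply_eq hf]
  exact apply_swap_eq_of_apply_eq (g := fun y => f (S y)) (hS.apply_eq_apply_of_eq hf) x

theorem conditions_congr (h : ∀ x, f (S x) = f (T x)) :
    (P0cond S f ∧ P1cond S S1 f ∧ P2cond S2 f) ↔
      (P0cond T f ∧ P1cond T S1 f ∧ P2cond S2 f) := by
  simp only [P0cond, P1cond, h]

theorem statement12_general {k : ℕ} (S0 S1 S2 : Equiv.Perm (Fin (2*k)))
    (f : Fin (2*k) → ℕ × ℕ)
    (i j : Fin (2*k)) (hf : f i = f j) :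
    (P0cond S0 f ∧ P1cond S0 S1 f ∧ P2cond S2 f) ↔
      (P0cond (Equiv.swap i j * S0 * Equiv.swap i j) f ∧
        P1cond (Equiv.swap i j * S0 * Equiv.swap i j) S1 f ∧ P2cond S2 f) := by
  have conj_conj :
      Equiv.swap i j * (Equiv.swap i j * S0 * Equiv.swap i j) * Equiv.swap i j = S0 := by
    simp only [mul_assoc, Equiv.swap_mul_self, mul_one, Equiv.swap_mul_self_mul]
  constructor
  · intro h
    exact (conditions_congr fun x => (h.1.apply_conj_swap hf x).symm).1 h
  · intro h
    have h' := h.1.apply_conj_swap hf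
    rw [conj_conj] at h'
    exact (conditions_congr h').2 h

/-- For a function `f` into the boxes of `2λ` with `f i = f j` (`i ≠ j`)
and `S₀' = (i j)∘S₀∘(i j)`, `f` satisfies (P0),(P1),(P2) w.r.t. `(S₀,S₁,S₂)` iff it
satisfies them w.r.t. `(S₀',S₁,S₂)`. -/
theorem statement12 {k n : ℕ} (S0 S1 S2 : Equiv.Perm (Fin (2*k)))
    (h0 : IsPairPartition S0) (h1 : IsPairPartition S1) (h2 : IsPairPartition S2)
    (lam : Nat.Partition n) (f : Fin (2*k) → ℕ × ℕ) (hbox : InBoxes2 lam f)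
    (i j : Fin (2*k)) (hij : i ≠ j) (hf : f i = f j) :
    (P0cond S0 f ∧ P1cond S0 S1 f ∧ P2cond S2 f) ↔
      (P0cond (Equiv.swap i j * S0 * Equiv.swap i j) f ∧
        P1cond (Equiv.swap i j * S0 * Equiv.swap i j) S1 f ∧ P2cond S2 f) :=
  statement12_general S0 S1 S2 f i j hf

end ZonalPP
end

section
/- Let S₀, S₁, S₂ be pair-partitions of [2k], let λ be a partition, and suppose there exists a function f from {1,…,2k} to the boxes of 2λ satisfying (P0), (P1), (P2) with respect to (S₀,S₁,S₂) and such that f(i) = f(j) for some i ≠ j. Set S₀′ = (i j)∘S₀∘(i j). Then the number of orbits of the subgroup generated by S₀′ and S₁ differs from the number of orbits of the subgroup generated by S₀ and S₁ by exactly one; consequently (−1)^{|L(S₀,S₁)|} + (−1)^{|L(S₀′,S₁)|} = 0. -/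
open scoped BigOperators

/-!
Write `π = S₀ * S₁`. Every loop of `(S₀, S₁)` is the union of two cycles of `π` which `S₀`
exchanges, so `π` has `2 |L(S₀, S₁)|` cycles; and `S₀' * S₁ = (i j) * (S₀i S₀j) * π`.
Left multiplication by a transposition `(x y)` splits the cycle through `x` and `y` if they share
one and merges their two cycles otherwise (compare both with the orbits of
`⟨σ, (x y)⟩ = ⟨(x y) * σ, (x y)⟩`, which are the cycles of `σ` with those of `x` and `y` merged).
By (P1) the column of `f` is constant on the cycles of `π`, and by (P0) `S₀` changes it; as
`f i = f j`, the cycle of `i` contains neither `S₀i` nor `S₀j`, so both transpositions split or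
both merge, and `π` gains or loses exactly two cycles, i.e. exactly one loop.
-/

namespace ZonalPP

open Equiv Equiv.Perm MulAction Subgroup

section OrbitQuotient

variable {G α β : Type*} [Group G] [MulAction G α]

theorem eq_of_mem_orbit_closure {S : Set G} {F : α → β}
    (hF : ∀ g ∈ S, ∀ z, F (g • z) = F z) {w z : α} (h : w ∈ orbit (closure S) z) :
    F w = F z := by
  obtain ⟨⟨g, hg⟩, rfl⟩ := h
  suffices ∀ z, F (g • z) = F z from this z
  induction hg using closure_induction with
  | mem g hg => exact hF g hg
  | one => simp
  | mul g g' _ _ ih ih' => intro z; rw [mul_smul, ih, ih']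
  | inv g _ ih => intro z; rw [← ih, smul_inv_smul]

theorem mk_eq_mk_iff {H : Subgroup G} {w z : α} :
    (Quotient.mk'' w : orbitRel.Quotient H α) = Quotient.mk'' z ↔ w ∈ orbit H z :=
  Quotient.eq''.trans orbitRel_apply

def orbitQuotientMap {H K : Subgroup G} (hHK : H ≤ K) :
    orbitRel.Quotient H α → orbitRel.Quotient K α :=
  Quotient.map' id fun _ _ h => by
    obtain ⟨⟨g, hg⟩, rfl⟩ := orbitRel_apply.mp h
    exact orbitRel_apply.mpr ⟨⟨g, hHK hg⟩, rfl⟩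

theorem sup_zpowers_eq_closure_union (H : Subgroup G) (g : G) :
    H ⊔ zpowers g = closure ((H : Set G) ∪ {g}) := by
  rw [Subgroup.closure_union, closure_eq, zpowers_eq_closure]

end OrbitQuotient

section Merge

variable {α : Type*} [DecidableEq α] (H : Subgroup (Perm α)) (x y : α)

open Classical in
noncomputable def mergeOrbits (q : orbitRel.Quotient H α) : orbitRel.Quotient H α :=
  if q = Quotient.mk'' y then Quotient.mk'' x else q

theorem mem_orbit_sup_zpowers_swap_iff {w z : α} :
    w ∈ orbit (H ⊔ zpowers (swap x y) : Subgroup (Perm α)) z ↔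
      mergeOrbits H x y (Quotient.mk'' w) = mergeOrbits H x y (Quotient.mk'' z) := by
  constructor
  · rw [sup_zpowers_eq_closure_union]
    refine eq_of_mem_orbit_closure (F := fun u => mergeOrbits H x y (Quotient.mk'' u)) ?_
    rintro g (hg | rfl) u
    · exact congrArg _ (mk_eq_mk_iff.mpr ⟨⟨g, hg⟩, rfl⟩)
    · rcases eq_or_ne u x with rfl | hux
      · simp [mergeOrbits]
      rcases eq_or_ne u y with rfl | huy
      · simp [mergeOrbits]
      · rw [Perm.smul_def, swap_apply_of_ne_of_ne hux huy]
  · intro h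
    let φ := orbitQuotientMap (α := α) (le_sup_left : H ≤ H ⊔ zpowers (swap x y))
    have hφ : ∀ q, φ (mergeOrbits H x y q) = φ q := by
      intro q
      unfold mergeOrbits
      split_ifs with hq
      · rw [hq]
        exact (mk_eq_mk_iff.mpr ⟨⟨swap x y, mem_sup_right (mem_zpowers _)⟩, swap_apply_right x y⟩)
      · rfl
    have : φ (Quotient.mk'' w) = φ (Quotient.mk'' z) := by rw [← hφ, h, hφ]
    exact mk_eq_mk_iff.mp this

theorem card_orbitRel_quotient_sup_zpowers_swap :
    Nat.card (orbitRel.Quotient (H ⊔ zpowers (swap x y) : Subgroup (Perm α)) α) =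
      Nat.card (Set.range (mergeOrbits H x y)) := by
  rw [← Function.Surjective.range_comp (Quotient.mk''_surjective (s₁ := orbitRel H α))]
  exact Nat.card_congr <| (Quotient.congrRight fun w z =>
    orbitRel_apply.trans (mem_orbit_sup_zpowers_swap_iff H x y)).trans
      (Setoid.quotientKerEquivRange _)

theorem card_orbitRel_quotient_sup_zpowers_swap_of_mem (h : x ∈ orbit H y) :
    Nat.card (orbitRel.Quotient (H ⊔ zpowers (swap x y) : Subgroup (Perm α)) α) =
      Nat.card (orbitRel.Quotient H α) := by
  have hid : mergeOrbits H x y = id := by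
    funext q
    unfold mergeOrbits
    split_ifs with hq
    · rw [hq, mk_eq_mk_iff.mpr h, id]
    · rfl
  rw [card_orbitRel_quotient_sup_zpowers_swap, hid, Set.range_id, Nat.card_univ]

theorem card_orbitRel_quotient_sup_zpowers_swap_of_notMem [Finite α] (h : x ∉ orbit H y) :
    Nat.card (orbitRel.Quotient H α) =
      Nat.card (orbitRel.Quotient (H ⊔ zpowers (swap x y) : Subgroup (Perm α)) α) + 1 := by
  have hxy : (Quotient.mk'' x : orbitRel.Quotient H α) ≠ Quotient.mk'' y :=
    mt mk_eq_mk_iff.mp h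
  have hrange : Set.range (mergeOrbits H x y) = {Quotient.mk'' y}ᶜ := by
    ext q
    simp only [Set.mem_range, Set.mem_compl_singleton_iff, mergeOrbits]
    constructor
    · rintro ⟨r, rfl⟩
      split_ifs <;> assumption
    · exact fun hq => ⟨q, if_neg hq⟩
  have : Nonempty (orbitRel.Quotient H α) := ⟨Quotient.mk'' x⟩
  have hpos : 0 < Nat.card (orbitRel.Quotient H α) := Nat.card_pos
  rw [card_orbitRel_quotient_sup_zpowers_swap, hrange, Nat.card_coe_set_eq, Set.ncard_compl,
    Set.ncard_singleton]
  omega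

end Merge

section Cycles

variable {α β : Type*}

noncomputable def numCycles (σ : Perm α) : ℕ :=
  Nat.card (orbitRel.Quotient (zpowers σ) α)

theorem mem_orbit_zpowers_iff_s13 {σ : Perm α} {w z : α} :
    w ∈ orbit (zpowers σ) z ↔ σ.SameCycle z w := by
  rw [mem_orbit_iff]
  constructor
  · rintro ⟨⟨g, m, rfl⟩, rfl⟩
    exact ⟨m, rfl⟩
  · rintro ⟨m, rfl⟩
    exact ⟨⟨σ ^ m, m, rfl⟩, rfl⟩

theorem eq_of_sameCycle {σ : Perm α} {F : α → β} (hF : ∀ z, F (σ z) = F z)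
    {u v : α} (h : σ.SameCycle u v) : F u = F v := by
  refine (eq_of_mem_orbit_closure (S := {σ}) ?_ ?_).symm
  · rintro g rfl
    exact hF
  · rw [← zpowers_eq_closure]
    exact mem_orbit_zpowers_iff_s13.mpr h

variable [DecidableEq α] {σ : Perm α} {x y : α}

theorem swap_mul_pow_apply_of_forall {z : α} {k : ℕ}
    (h : ∀ t < k, (σ ^ (t + 1)) z ≠ x ∧ (σ ^ (t + 1)) z ≠ y) :
    ((swap x y * σ) ^ k) z = (σ ^ k) z := by
  induction k with
  | zero => rfl
  | succ k ih =>
    obtain ⟨hx, hy⟩ := h k k.lt_succ_self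
    rw [pow_succ', mul_apply, ih fun t ht => h t (by omega), mul_apply, ← mul_apply σ,
      ← pow_succ', swap_apply_of_ne_of_ne hx hy]

theorem sameCycle_swap_mul_of_not_sameCycle [Finite α] (h : ¬σ.SameCycle x y) :
    (swap x y * σ).SameCycle x y := by
  classical
  have hper : ∃ n, 0 < n ∧ (σ ^ n) x = x :=
    ⟨orderOf σ, orderOf_pos σ, by rw [pow_orderOf_eq_one]; rfl⟩
  obtain ⟨hpos, hn⟩ := Nat.find_spec hper
  obtain ⟨m, hm⟩ := Nat.exists_eq_succ_of_ne_zero hpos.ne'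
  have hagree : ((swap x y * σ) ^ m) x = (σ ^ m) x :=
    swap_mul_pow_apply_of_forall fun t ht =>
      ⟨fun he => Nat.find_min hper (by omega : t + 1 < Nat.find hper) ⟨t.succ_pos, he⟩,
        fun he => h ⟨((t + 1 : ℕ) : ℤ), by rw [zpow_natCast]; exact he⟩⟩
  refine ⟨((m + 1 : ℕ) : ℤ), ?_⟩
  rw [zpow_natCast, pow_succ', mul_apply, hagree, mul_apply, ← mul_apply σ, ← pow_succ',
    ← Nat.succ_eq_add_one, ← hm, hn, swap_apply_left]

theorem not_sameCycle_swap_mul_of_sameCycle [Finite α] (hxy : x ≠ y) (h : σ.SameCycle x y) :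
    ¬(swap x y * σ).SameCycle x y := by
  classical
  have hret : ∃ n, 0 < n ∧ (σ ^ n) y = x := by
    obtain ⟨n, hn, -, hny⟩ := h.symm.exists_pow_eq''
    exact ⟨n, hn, hny⟩
  set n := Nat.find hret
  obtain ⟨hpos, hn⟩ : 0 < n ∧ (σ ^ n) y = x := Nat.find_spec hret
  have hmin : ∀ t, 0 < t → t < n → (σ ^ t) y ≠ x := fun t h0 ht he =>
    Nat.find_min hret ht ⟨h0, he⟩
  have hagree : ∀ k < n, ((swap x y * σ) ^ k) y = (σ ^ k) y := by
    refine fun k hk => swap_mul_pow_apply_of_forall fun t ht =>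
      ⟨hmin (t + 1) (by omega) (by omega), fun he => hmin (n - (t + 1)) (by omega) (by omega) ?_⟩
    have hsplit : (σ ^ n) y = (σ ^ (n - (t + 1))) ((σ ^ (t + 1)) y) := by
      rw [← mul_apply, ← pow_add, Nat.sub_add_cancel (by omega)]
    rw [← hn, hsplit, he]
  -- the `swap x y * σ`-orbit of `y` closes up after `n` steps, before meeting `x`
  have hperiod : ((swap x y * σ) ^ n) y = y := by
    obtain ⟨m, hm⟩ := Nat.exists_eq_succ_of_ne_zero hpos.ne'
    rw [hm, pow_succ', mul_apply, hagree m (by omega), mul_apply, ← mul_apply σ, ← pow_succ',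
      ← Nat.succ_eq_add_one, ← hm, hn, swap_apply_left]
  intro hc
  obtain ⟨s, hs⟩ := hc.symm.exists_nat_pow_eq
  rw [← Nat.mod_add_div s n, pow_add, pow_mul, mul_apply,
    pow_apply_eq_self_of_apply_eq_self hperiod, hagree _ (Nat.mod_lt _ hpos)] at hs
  rcases Nat.eq_zero_or_pos (s % n) with h0 | h0
  · rw [h0, pow_zero, one_apply] at hs
    exact hxy hs.symm
  · exact hmin _ h0 (Nat.mod_lt _ hpos) hs

theorem sameCycle_swap_mul_iff [Finite α] (hxy : x ≠ y) :
    (swap x y * σ).SameCycle x y ↔ ¬σ.SameCycle x y :=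
  ⟨fun h h' => not_sameCycle_swap_mul_of_sameCycle hxy h' h,
    sameCycle_swap_mul_of_not_sameCycle⟩

theorem zpowers_swap_mul_sup_zpowers_swap :
    zpowers (swap x y * σ) ⊔ zpowers (swap x y) = zpowers σ ⊔ zpowers (swap x y) := by
  have hτ {H : Subgroup (Perm α)} : swap x y ∈ H ⊔ zpowers (swap x y) :=
    mem_sup_right (mem_zpowers _)
  refine le_antisymm (sup_le (zpowers_le.mpr ?_) le_sup_right)
    (sup_le (zpowers_le.mpr ?_) le_sup_right)
  · exact mul_mem hτ (mem_sup_left (mem_zpowers σ))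
  · simpa only [swap_mul_self_mul] using mul_mem hτ (mem_sup_left (mem_zpowers (swap x y * σ)))

theorem numCycles_swap_mul [Fintype α] (hxy : x ≠ y) :
    (numCycles (swap x y * σ) : ℤ) = numCycles σ + if σ.SameCycle x y then 1 else -1 := by
  have hK := zpowers_swap_mul_sup_zpowers_swap (σ := σ) (x := x) (y := y)
  unfold numCycles
  split_ifs with h
  · have h' : x ∉ orbit (zpowers (swap x y * σ)) y := by
      rw [mem_orbit_zpowers_iff_s13, sameCycle_comm, sameCycle_swap_mul_iff hxy, not_not]
      exact h
    have e1 := card_orbitRel_quotient_sup_zpowers_swap_of_mem _ x y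
      (mem_orbit_zpowers_iff_s13.mpr h.symm)
    have e2 := card_orbitRel_quotient_sup_zpowers_swap_of_notMem _ x y h'
    rw [hK] at e2
    omega
  · have h' : x ∈ orbit (zpowers (swap x y * σ)) y := by
      rw [mem_orbit_zpowers_iff_s13, sameCycle_comm, sameCycle_swap_mul_iff hxy]
      exact h
    have e1 := card_orbitRel_quotient_sup_zpowers_swap_of_notMem _ x y
      (mt mem_orbit_zpowers_iff_s13.mp (mt SameCycle.symm h))
    have e2 := card_orbitRel_quotient_sup_zpowers_swap_of_mem _ x y h'
    rw [hK] at e2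
    omega

theorem sameCycle_swap_mul_iff_of_not_sameCycle [Finite α] {z w : α} (hx : ¬σ.SameCycle z x)
    (hy : ¬σ.SameCycle z y) : (swap x y * σ).SameCycle z w ↔ σ.SameCycle z w := by
  have hpow (k : ℕ) : ((swap x y * σ) ^ k) z = (σ ^ k) z :=
    swap_mul_pow_apply_of_forall fun t _ =>
      ⟨fun he => hx ⟨((t + 1 : ℕ) : ℤ), by rw [zpow_natCast]; exact he⟩,
        fun he => hy ⟨((t + 1 : ℕ) : ℤ), by rw [zpow_natCast]; exact he⟩⟩
  constructor
  · intro h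
    obtain ⟨k, hk⟩ := h.exists_nat_pow_eq
    exact ⟨k, by rw [zpow_natCast, ← hpow, hk]⟩
  · intro h
    obtain ⟨k, hk⟩ := h.exists_nat_pow_eq
    exact ⟨k, by rw [zpow_natCast, hpow, hk]⟩

theorem numCycles_swap_mul_swap_mul [Fintype α] {a b c d : α} (hab : a ≠ b) (hcd : c ≠ d)
    (hac : ¬σ.SameCycle a c) (had : ¬σ.SameCycle a d) (hsame : σ.SameCycle c d ↔ σ.SameCycle a b) :
    (numCycles (swap a b * (swap c d * σ)) : ℤ) =
      numCycles σ + 2 * if σ.SameCycle a b then 1 else -1 := by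
  rw [numCycles_swap_mul hab, numCycles_swap_mul hcd]
  simp only [sameCycle_swap_mul_iff_of_not_sameCycle hac had, hsame]
  split_ifs <;> ring

end Cycles

section Loops

variable {N : ℕ} {a b : Perm (Fin N)}

theorem IsPairPartition.mul_self (ha : IsPairPartition a) : a * a = 1 :=
  Equiv.ext ha.1

theorem IsPairPartition.inv_eq (ha : IsPairPartition a) : a⁻¹ = a :=
  inv_eq_of_mul_eq_one_right ha.mul_self

theorem IsPairPartition.conj (ha : IsPairPartition a) (g : Perm (Fin N)) :
    IsPairPartition (g * a * g⁻¹) :=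
  ⟨fun x => by simp [ha.1 _], fun x hx => ha.2 (g⁻¹ x) (by simpa using congrArg (⇑g⁻¹) hx)⟩

theorem IsPairPartition.mul_mul_zpow (ha : IsPairPartition a) (hb : IsPairPartition b) (m : ℤ) :
    a * (a * b) ^ m = (a * b) ^ (-m) * a := by
  have hconj : a * (a * b) * a⁻¹ = (a * b)⁻¹ := by
    rw [mul_inv_rev, ha.inv_eq, hb.inv_eq, ← mul_assoc, ha.mul_self, one_mul]
  rw [← mul_inv_eq_iff_eq_mul, ← conj_zpow, hconj, inv_zpow']

theorem IsPairPartition.not_sameCycle_mul_apply (ha : IsPairPartition a) (hb : IsPairPartition b)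
    (z : Fin N) : ¬(a * b).SameCycle z (a z) := by
  set π := a * b
  have hconj (m : ℤ) (u : Fin N) : a ((π ^ m) u) = (π ^ (-m)) (a u) := by
    rw [← mul_apply, ha.mul_mul_zpow hb, mul_apply]
  rintro ⟨m, hm⟩
  obtain ⟨t, rfl | rfl⟩ := Int.even_or_odd' m
  · refine ha.2 ((π ^ t) z) ?_
    rw [hconj, ← hm, ← mul_apply, ← zpow_add]
    congr 2
    ring
  · refine hb.2 ((π ^ t) z) ?_
    have hb' : a * π = b := by rw [← mul_assoc, ha.mul_self, one_mul]
    rw [← hb', mul_apply, ← mul_apply π, ← zpow_one_add, hconj, ← hm, ← mul_apply, ← zpow_add]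
    congr 2
    ring

noncomputable def cyclePair (a b : Perm (Fin N)) (z : Fin N) :
    Sym2 (orbitRel.Quotient (zpowers (a * b)) (Fin N)) :=
  s(Quotient.mk'' z, Quotient.mk'' (a z))

theorem cyclePair_eq_of_mem_orbit (ha : IsPairPartition a) (hb : IsPairPartition b) {w z : Fin N}
    (h : w ∈ orbit (closure {a, b}) z) : cyclePair a b w = cyclePair a b z := by
  refine eq_of_mem_orbit_closure (fun g hg u => ?_) h
  rcases hg with hg | hg <;> subst g <;> simp only [cyclePair, Perm.smul_def]
  · rw [ha.1, Sym2.eq_swap]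
  · have hbu : b u = ((a * b) ^ (-1 : ℤ)) (a u) := by
      rw [← mul_apply, ← ha.mul_mul_zpow hb, zpow_one, ← mul_assoc, ha.mul_self, one_mul]
    rw [mk_eq_mk_iff.mpr (mem_orbit_zpowers_iff_s13.mpr ⟨-1, hbu.symm⟩),
      show a (b u) = (a * b) u from rfl,
      mk_eq_mk_iff.mpr (mem_orbit_zpowers_iff_s13.mpr (sameCycle_apply_right.mpr .rfl)),
      Sym2.eq_swap]

theorem numCycles_mul_eq_two_mul_numLoops (ha : IsPairPartition a) (hb : IsPairPartition b) :
    numCycles (a * b) = 2 * numLoops a b := by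
  classical
  have ha_mem : a ∈ closure ({a, b} : Set (Perm (Fin N))) := subset_closure (by simp)
  have hle : zpowers (a * b) ≤ closure {a, b} :=
    zpowers_le.mpr (mul_mem ha_mem (subset_closure (by simp)))
  let cyc : Fin N → orbitRel.Quotient (zpowers (a * b)) (Fin N) := Quotient.mk''
  let φ : orbitRel.Quotient (zpowers (a * b)) (Fin N) → Loops a b := orbitQuotientMap hle
  have hfib (w z : Fin N) : φ (cyc w) = φ (cyc z) ↔ cyc w = cyc z ∨ cyc w = cyc (a z) := by
    constructor
    · intro h
      exact (Sym2.eq_iff.mp (cyclePair_eq_of_mem_orbit ha hb (mk_eq_mk_iff.mp h))).imp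
        And.left And.left
    · rintro (h | h) <;> rw [h]
      exact mk_eq_mk_iff.mpr ⟨⟨a, ha_mem⟩, rfl⟩
  have hcard (q : Loops a b) : (Finset.univ.filter fun r => φ r = q).card = 2 := by
    induction q using Quotient.inductionOn' with | h z =>
    have hne : cyc z ≠ cyc (a z) := fun h =>
      ha.not_sameCycle_mul_apply hb z (mem_orbit_zpowers_iff_s13.mp (mk_eq_mk_iff.mp h)).symm
    change (Finset.univ.filter fun r => φ r = φ (cyc z)).card = 2
    rw [← Finset.card_pair hne]
    congr 1
    ext r
    induction r using Quotient.inductionOn' with | h w =>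
    simpa using hfib w z
  unfold numCycles numLoops
  rw [Nat.card_eq_fintype_card, Nat.card_eq_fintype_card, ← Finset.card_univ,
    Finset.card_eq_sum_card_fiberwise (f := φ) (t := Finset.univ) (fun _ _ => Finset.mem_univ _),
    Finset.sum_const_nat fun q _ => hcard q, Finset.card_univ, mul_comm]

theorem numLoops_conj_swap {S0 S1 : Perm (Fin N)} (h0 : IsPairPartition S0)
    (h1 : IsPairPartition S1) {i j : Fin N} (hij : i ≠ j) (hi : ¬(S0 * S1).SameCycle i (S0 i))
    (hj : ¬(S0 * S1).SameCycle i (S0 j)) :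
    (numLoops (swap i j * S0 * swap i j) S1 : ℤ) =
      numLoops S0 S1 + if (S0 * S1).SameCycle i j then 1 else -1 := by
  have h0' : IsPairPartition (swap i j * S0 * swap i j) := by
    simpa only [swap_inv] using h0.conj (swap i j)
  have hmul : swap i j * S0 * swap i j * S1 = swap i j * (swap (S0 i) (S0 j) * (S0 * S1)) := by
    rw [swap_apply_apply, h0.inv_eq]
    simp only [mul_assoc]
    rw [← mul_assoc S0 S0, h0.mul_self, one_mul]
  have hsame : (S0 * S1).SameCycle (S0 i) (S0 j) ↔ (S0 * S1).SameCycle i j := by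
    have hconj : S0 * (S0 * S1) * S0⁻¹ = (S0 * S1)⁻¹ := by
      rw [mul_inv_rev, h0.inv_eq, h1.inv_eq, ← mul_assoc, h0.mul_self, one_mul]
    rw [← sameCycle_inv, ← hconj, sameCycle_conj, h0.inv_eq, h0.1 i, h0.1 j]
  have key := numCycles_swap_mul_swap_mul hij (S0.injective.ne hij) hi hj hsame
  rw [← hmul, numCycles_mul_eq_two_mul_numLoops h0' h1, numCycles_mul_eq_two_mul_numLoops h0 h1]
    at key
  push_cast at key
  split_ifs at key ⊢ <;> omega

end Loops

theorem statement13_general {k n : ℕ} (S0 S1 S2 : Equiv.Perm (Fin (2*k)))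
    (h0 : IsPairPartition S0) (h1 : IsPairPartition S1)
    (lam : Nat.Partition n) (i j : Fin (2*k)) (hij : i ≠ j)
    (hex : ∃ f : Fin (2*k) → ℕ × ℕ, InBoxes2 lam f ∧ P0cond S0 f ∧ P1cond S0 S1 f ∧
      P2cond S2 f ∧ f i = f j) :
    (numLoops (Equiv.swap i j * S0 * Equiv.swap i j) S1 = numLoops S0 S1 + 1 ∨
      numLoops S0 S1 = numLoops (Equiv.swap i j * S0 * Equiv.swap i j) S1 + 1) ∧
    (-1 : ℤ) ^ numLoops S0 S1 +
      (-1 : ℤ) ^ numLoops (Equiv.swap i j * S0 * Equiv.swap i j) S1 = 0 := by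
  obtain ⟨f, -, hP0, hP1, -, hfij⟩ := hex
  have hcol {u : Fin (2 * k)} (h : (S0 * S1).SameCycle i u) : (f i).2 = (f u).2 :=
    eq_of_sameCycle (σ := S0 * S1) (F := fun u => (f u).2) hP1 h
  have hi : ¬(S0 * S1).SameCycle i (S0 i) := fun h => (hP0 i).2.2 (hcol h).symm
  have hj : ¬(S0 * S1).SameCycle i (S0 j) := fun h => (hP0 j).2.2 (by rw [← hcol h, hfij])
  have hL := numLoops_conj_swap h0 h1 hij hi hj
  split_ifs at hL
  · have hsucc : numLoops (swap i j * S0 * swap i j) S1 = numLoops S0 S1 + 1 := by omega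
    exact ⟨Or.inl hsucc, by rw [hsucc, pow_succ]; ring⟩
  · have hsucc : numLoops S0 S1 = numLoops (swap i j * S0 * swap i j) S1 + 1 := by omega
    exact ⟨Or.inr hsucc, by rw [hsucc, pow_succ]; ring⟩

/-- If some function `f` into the boxes of `2λ` satisfies (P0),(P1),(P2)
w.r.t. `(S₀,S₁,S₂)` and `f i = f j` with `i ≠ j`, then for `S₀' = (i j)∘S₀∘(i j)` the
numbers of loops `|L(S₀',S₁)|` and `|L(S₀,S₁)|` differ by exactly one; consequently
`(-1)^{|L(S₀,S₁)|} + (-1)^{|L(S₀',S₁)|} = 0`. -/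
theorem statement13 {k n : ℕ} (S0 S1 S2 : Equiv.Perm (Fin (2*k)))
    (h0 : IsPairPartition S0) (h1 : IsPairPartition S1) (h2 : IsPairPartition S2)
    (lam : Nat.Partition n) (i j : Fin (2*k)) (hij : i ≠ j)
    (hex : ∃ f : Fin (2*k) → ℕ × ℕ, InBoxes2 lam f ∧ P0cond S0 f ∧ P1cond S0 S1 f ∧
      P2cond S2 f ∧ f i = f j) :
    (numLoops (Equiv.swap i j * S0 * Equiv.swap i j) S1 = numLoops S0 S1 + 1 ∨
      numLoops S0 S1 = numLoops (Equiv.swap i j * S0 * Equiv.swap i j) S1 + 1) ∧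
    (-1 : ℤ) ^ numLoops S0 S1 +
      (-1 : ℤ) ^ numLoops (Equiv.swap i j * S0 * Equiv.swap i j) S1 = 0 :=
  statement13_general S0 S1 S2 h0 h1 lam i j hij hex

end ZonalPP
end
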